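/- arXiv:1511.08163 — 6 statements merged into one kernel-verified Lean document; each statement's English description precedes it below -/
import Mathlib

section
/- Let n ≥ 4 be an integer. Consider the red/blue edge-coloring of K_{6n} ⊔ S_{4n+1} defined as follows: partition the vertex set of K_{6n} into three sets A_1, A_2, A_3 each of size 2n; color all edges inside each A_i red and all edges between different A_i's blue; join the additional vertex w to all 4n vertices of A_1 ∪ A_2 by blue edges and to exactly one vertex of A_3 by a red edge. Then this coloring contains no red subgraph isomorphic to F_n and no blue subgraph isomorphic to K_4. Consequently r_*(F_n, K_4) ≥ 4n + 2. -/
/-!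
The red graph consists of three disjoint cliques of size `2n` and one pendant edge at `w`.
Every vertex of `Fₙ` lies in a triangle, so a red `Fₙ` avoids `w`; its center and the `2n`
neighbours of the center then lie in one clique, which has only `2n` vertices.
The blue graph is properly 3-coloured by the blocks once `w` is put into `A₃`, because the blue
neighbours of `w` lie in `A₁ ∪ A₂`; so there is no blue `K₄`.
For `k ≤ 4n + 1` the same colouring, with the three thirds of `Fin (6n)` as blocks, lives on
`K_{6n} ⊔ S_k`: there `w` only sees vertices below `4n + 1`, so its one red edge goes to `4n`.
-/

open SimpleGraph

/-- The fan graph `Fₙ`: the join of a single vertex (the center, `none`) with `n`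
pairwise disjoint edges (`some (i, a)` is matched with `some (i, !a)`). -/
def Fan (n : ℕ) : SimpleGraph (Option (Fin n × Bool)) where
  Adj u v := u ≠ v ∧ (u = none ∨ v = none ∨ ∃ i a b, u = some (i, a) ∧ v = some (i, b))
  symm := by
    constructor
    rintro u v ⟨h1, h2⟩
    exact ⟨h1.symm, by tauto⟩
  loopless := by constructor; rintro u ⟨h1, -⟩; exact h1 rfl

/-- `G` contains a subgraph isomorphic to the fan graph `Fₙ`. -/
def ContainsFan {V : Type*} (G : SimpleGraph V) (n : ℕ) : Prop :=
  ∃ f : Option (Fin n × Bool) ↪ V, ∀ u v, (Fan n).Adj u v → G.Adj (f u) (f v)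

/-- `G` contains a subgraph isomorphic to `K₄`. -/
def ContainsK4 {V : Type*} (G : SimpleGraph V) : Prop :=
  ∃ a b c d : V, G.Adj a b ∧ G.Adj a c ∧ G.Adj a d ∧ G.Adj b c ∧ G.Adj b d ∧ G.Adj c d

/-- The graph `K_m ⊔ S_k`: the complete graph on `m` vertices together with one extra
vertex (`none`) joined to `k` of the vertices of the complete graph.
A red/blue edge-coloring of this graph is given by its red subgraph `R ≤ KSk m k`;
the blue subgraph is then `KSk m k \ R`. -/
def KSk (m k : ℕ) : SimpleGraph (Option (Fin m)) where
  Adj u v :=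
    match u, v with
    | some a, some b => a ≠ b
    | none, some a => a.val < k
    | some a, none => a.val < k
    | none, none => False
  symm := by constructor; rintro (_ | a) (_ | b) h <;> first | exact h | exact h.symm
  loopless := by constructor; rintro (_ | a) h; exacts [h, h rfl]

open Finset

section Fan

variable {V ι : Type*} {n : ℕ}

theorem Fan.adj_none_some (x : Fin n × Bool) : (Fan n).Adj none (some x) :=
  ⟨by simp, Or.inl rfl⟩

theorem Fan.exists_adj_adj_ne (hn : 0 < n) (v : Option (Fin n × Bool)) :
    ∃ x y, x ≠ y ∧ (Fan n).Adj v x ∧ (Fan n).Adj v y := by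
  rcases v with _ | ⟨i, a⟩
  · exact ⟨_, _, by simp, Fan.adj_none_some (⟨0, hn⟩, true),
      Fan.adj_none_some (⟨0, hn⟩, false)⟩
  · exact ⟨none, some (i, !a), by simp, (Fan.adj_none_some _).symm,
      ⟨by cases a <;> simp, Or.inr (Or.inr ⟨i, a, !a, rfl, rfl⟩)⟩⟩

/-- Every vertex of `Fₙ` lies in a triangle, so a copy of `Fₙ` avoids a vertex of degree `≤ 1`. -/
theorem ContainsFan.comap_some {G : SimpleGraph (Option V)} (hn : 0 < n)
    (hnone : (G.neighborSet none).Subsingleton) (h : ContainsFan G n) :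
    ContainsFan (G.comap some) n := by
  obtain ⟨f, hf⟩ := h
  have hsome : ∀ v, ∃ u, f v = some u := by
    intro v
    obtain ⟨x, y, hxy, hx, hy⟩ := Fan.exists_adj_adj_ne hn v
    refine Option.ne_none_iff_exists'.mp fun hv => hxy (f.injective ?_)
    exact hnone (hv ▸ hf _ _ hx) (hv ▸ hf _ _ hy)
  choose g hg using hsome
  refine ⟨⟨g, fun v w h => f.injective (by rw [hg, hg, h])⟩, fun u v huv => ?_⟩
  show G.Adj (some (g u)) (some (g v))
  simpa [hg] using hf u v huv

/-- The center of `Fₙ` is adjacent to all `2n` other vertices, so a copy of `Fₙ` lies in one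
fiber. -/
theorem not_containsFan_of_adj_within_fibers [Fintype V] [DecidableEq ι]
    {G : SimpleGraph V} (p : V → ι) (hp : ∀ u v, G.Adj u v → p u = p v)
    (hfiber : ∀ i, #{u | p u = i} ≤ 2 * n) :
    ¬ ContainsFan G n := by
  rintro ⟨f, hf⟩
  have hcenter : ∀ v, p (f v) = p (f none) := by
    rintro (_ | x)
    · rfl
    · exact (hp _ _ (hf _ _ (Fan.adj_none_some x))).symm
  have : 2 * n + 1 ≤ 2 * n := calc
    2 * n + 1 = #(univ : Finset (Option (Fin n × Bool))) := by simp [mul_comm]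
    _ ≤ #{u | p u = p (f none)} :=
      card_le_card_of_injOn f (by simp [Set.MapsTo, hcenter]) f.injective.injOn
    _ ≤ 2 * n := hfiber _
  omega

end Fan

theorem SimpleGraph.Coloring.not_containsK4 {V : Type*} {G : SimpleGraph V}
    (C : G.Coloring (Fin 3)) : ¬ ContainsK4 G := by
  rintro ⟨a, b, c, d, hab, hac, had, hbc, hbd, hcd⟩
  have := C.valid hab; have := C.valid hac; have := C.valid had
  have := C.valid hbc; have := C.valid hbd; have := C.valid hcd
  omega

theorem not_containsFan_and_not_containsK4_of_blocks {V : Type*} [Fintype V] {n : ℕ}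
    (hn : 0 < n) {R B : SimpleGraph (Option V)} (p : V → Fin 3)
    (hfiber : ∀ i, #{u | p u = i} ≤ 2 * n)
    (hR : ∀ u v, R.Adj (some u) (some v) → p u = p v)
    (hRnone : (R.neighborSet none).Subsingleton)
    (hB : ∀ u v, B.Adj (some u) (some v) → p u ≠ p v)
    (hBnone : ∀ u, B.Adj none (some u) → p u ≠ 2) :
    ¬ ContainsFan R n ∧ ¬ ContainsK4 B := by
  refine ⟨fun hfan =>
      not_containsFan_of_adj_within_fibers p hR hfiber (hfan.comap_some hn hRnone),
    (Coloring.mk (G := B) (fun x => x.elim 2 p) ?_).not_containsK4⟩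
  rintro (_ | u) (_ | v) h
  · exact (B.irrefl h).elim
  · exact (hBnone v h).symm
  · exact hBnone u h.symm
  · exact hB u v h

section Blocks

variable {α : Type*} [DecidableEq α] {A1 A2 A3 : Finset α}

def blockIndex (A1 A2 : Finset α) (u : α) : Fin 3 :=
  if u ∈ A1 then 0 else if u ∈ A2 then 1 else 2

theorem blockIndex_ne_two {u : α} (h : u ∈ A1 ∪ A2) : blockIndex A1 A2 u ≠ 2 := by
  unfold blockIndex; split_ifs <;> simp_all

theorem blockIndex_eq_blockIndex_iff [Fintype α] (hd12 : Disjoint A1 A2) (hd13 : Disjoint A1 A3)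
    (hd23 : Disjoint A2 A3) (hcover : A1 ∪ A2 ∪ A3 = univ) {u v : α} :
    blockIndex A1 A2 u = blockIndex A1 A2 v ↔
      (u ∈ A1 ∧ v ∈ A1) ∨ (u ∈ A2 ∧ v ∈ A2) ∨ (u ∈ A3 ∧ v ∈ A3) := by
  have hmem : ∀ x, x ∈ A1 ∪ A2 ∪ A3 := by simp [hcover]
  have h12 := disjoint_left.mp hd12
  have h13 := disjoint_left.mp hd13
  have h23 := disjoint_left.mp hd23
  have hu := hmem u
  have hv := hmem v
  simp only [mem_union] at hu hv
  unfold blockIndex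
  split_ifs <;> grind

theorem card_filter_blockIndex_le [Fintype α] (hcover : A1 ∪ A2 ∪ A3 = univ) {m : ℕ}
    (h1 : #A1 ≤ m) (h2 : #A2 ≤ m) (h3 : #A3 ≤ m) (i : Fin 3) :
    #{u | blockIndex A1 A2 u = i} ≤ m := by
  have hsub : ∀ u, blockIndex A1 A2 u = i → u ∈ ![A1, A2, A3] i := by
    intro u hu
    have := hcover ▸ mem_univ u
    simp only [mem_union] at this
    fin_cases i <;> simp only [blockIndex] at hu <;> split_ifs at hu <;> simp_all
  calc #{u | blockIndex A1 A2 u = i} ≤ #(![A1, A2, A3] i) :=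
        card_le_card fun u hu => hsub u (mem_filter.1 hu).2
    _ ≤ m := by fin_cases i <;> assumption

end Blocks

section Thirds

variable {n : ℕ}

def thirdIndex (n : ℕ) (u : Fin (6 * n)) : Fin 3 :=
  ⟨u / (2 * n), Nat.div_lt_of_lt_mul (by omega)⟩

theorem thirdIndex_eq_two_iff {u : Fin (6 * n)} : thirdIndex n u = 2 ↔ 4 * n ≤ u := by
  have hlt : (u : ℕ) / (2 * n) < 3 := (thirdIndex n u).isLt
  have := u.isLt
  have hdiv : 4 * n ≤ u ↔ 2 ≤ (u : ℕ) / (2 * n) := by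
    rw [Nat.le_div_iff_mul_le (by omega)]; omega
  rw [hdiv, Fin.ext_iff]
  show (u : ℕ) / (2 * n) = 2 ↔ _
  omega

theorem card_filter_thirdIndex_le (i : Fin 3) : #{u | thirdIndex n u = i} ≤ 2 * n := by
  calc #{u | thirdIndex n u = i} ≤ #(range (2 * n)) := by
        refine card_le_card_of_injOn (fun u => (u : ℕ) % (2 * n)) (fun u _ => ?_) ?_
        · have := u.isLt
          simpa using Nat.mod_lt _ (by omega : 0 < 2 * n)
        · intro u hu v hv (huv : (u : ℕ) % (2 * n) = v % (2 * n))
          simp only [coe_filter, mem_univ, true_and, Set.mem_ofPred_eq] at hu hv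
          have hdiv : (u : ℕ) / (2 * n) = v / (2 * n) := by
            simpa [thirdIndex] using congrArg Fin.val (hu.trans hv.symm)
          exact Fin.ext <| by
            rw [← Nat.div_add_mod u (2 * n), ← Nat.div_add_mod v (2 * n), hdiv, huv]
    _ = 2 * n := card_range _

end Thirds

theorem exists_le_KSk_not_containsFan_and_not_containsK4 {n k : ℕ} (hn : 0 < n)
    (hk : k ≤ 4 * n + 1) :
    ∃ R ≤ KSk (6 * n) k, ¬ ContainsFan R n ∧ ¬ ContainsK4 (KSk (6 * n) k \ R) := by
  let q : Option (Fin (6 * n)) → Fin 3 := fun x => x.elim 2 (thirdIndex n)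
  -- red: the edges of `K_{6n} ⊔ S_k` inside a block, `w = none` counting as a vertex of block `2`
  refine ⟨KSk (6 * n) k \ (⊤ : SimpleGraph (Fin 3)).comap q, sdiff_le,
    not_containsFan_and_not_containsK4_of_blocks hn (thirdIndex n) card_filter_thirdIndex_le
      ?_ ?_ ?_ ?_⟩
  · intro u v h
    simpa [q] using h.2
  · refine (Set.subsingleton_singleton (a := some ⟨4 * n, by omega⟩)).anti ?_
    rintro (_ | u) ⟨hw, hblock⟩
    · exact hw.elim
    · have h4 : 4 * n ≤ u :=
        thirdIndex_eq_two_iff.1 (by simpa [q] using hblock : (2 : Fin 3) = _).symm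
      have hk' : (u : ℕ) < k := hw
      simp only [Set.mem_singleton_iff, Option.some.injEq, Fin.ext_iff]
      omega
  · intro u v h
    exact (by simpa [q] using h : _ ∧ _).2
  · intro u h
    exact (by simpa [q] using h : _ ∧ 2 ≠ thirdIndex n u).2.symm

theorem star_critical_lower_bound_general (n : ℕ) (hn : 4 ≤ n)
    (A1 A2 A3 : Finset (Fin (6 * n)))
    (hc1 : A1.card = 2 * n) (hc2 : A2.card = 2 * n) (hc3 : A3.card = 2 * n)
    (hd12 : Disjoint A1 A2) (hd13 : Disjoint A1 A3) (hd23 : Disjoint A2 A3)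
    (hcover : A1 ∪ A2 ∪ A3 = Finset.univ)
    (a₀ : Fin (6 * n))
    (R B : SimpleGraph (Option (Fin (6 * n))))
    (hR : ∀ u v : Fin (6 * n), R.Adj (some u) (some v) ↔
      u ≠ v ∧ ((u ∈ A1 ∧ v ∈ A1) ∨ (u ∈ A2 ∧ v ∈ A2) ∨ (u ∈ A3 ∧ v ∈ A3)))
    (hRw : ∀ u : Fin (6 * n), R.Adj none (some u) ↔ u = a₀)
    (hB : ∀ u v : Fin (6 * n), B.Adj (some u) (some v) ↔
      u ≠ v ∧ ¬((u ∈ A1 ∧ v ∈ A1) ∨ (u ∈ A2 ∧ v ∈ A2) ∨ (u ∈ A3 ∧ v ∈ A3)))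
    (hBw : ∀ u : Fin (6 * n), B.Adj none (some u) ↔ u ∈ A1 ∪ A2) :
    (¬ ContainsFan R n ∧ ¬ ContainsK4 B) ∧
    ∀ k : ℕ, 0 < k →
      (∀ R' : SimpleGraph (Option (Fin (6 * n))), R' ≤ KSk (6 * n) k →
        ContainsFan R' n ∨ ContainsK4 (KSk (6 * n) k \ R')) →
      4 * n + 2 ≤ k := by
  refine ⟨not_containsFan_and_not_containsK4_of_blocks (by omega) (blockIndex A1 A2)
      (card_filter_blockIndex_le hcover hc1.le hc2.le hc3.le)
      (fun u v h =>
        (blockIndex_eq_blockIndex_iff hd12 hd13 hd23 hcover).2 ((hR u v).1 h).2) ?_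
      (fun u v h hblock =>
        ((hB u v).1 h).2 ((blockIndex_eq_blockIndex_iff hd12 hd13 hd23 hcover).1 hblock))
      (fun u h => blockIndex_ne_two ((hBw u).1 h)), ?_⟩
  · refine (Set.subsingleton_singleton (a := some a₀)).anti ?_
    rintro (_ | u) h
    · exact (R.irrefl h).elim
    · exact congrArg some ((hRw u).1 h)
  · intro k _ hforall
    by_contra! hk
    obtain ⟨R', hle, hfan, hK4⟩ :=
      exists_le_KSk_not_containsFan_and_not_containsK4 (by omega) (by omega : k ≤ 4 * n + 1)
    exact (hforall R' hle).elim hfan hK4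

/-- The explicit critical coloring of `K_{6n} ⊔ S_{4n+1}`: three red cliques
`A₁, A₂, A₃` of size `2n`, all cross edges blue, the extra vertex `w` (here `none`)
joined by blue edges to all of `A₁ ∪ A₂` and by one red edge to a vertex `a₀ ∈ A₃`.
It contains no red `Fₙ` and no blue `K₄`; consequently `r_*(Fₙ, K₄) ≥ 4n + 2`
(the star-critical host being `K_{6n} ⊔ S_k` since `r(Fₙ, K₄) = 6n + 1`). -/
theorem star_critical_lower_bound (n : ℕ) (hn : 4 ≤ n)
    (A1 A2 A3 : Finset (Fin (6 * n)))
    (hc1 : A1.card = 2 * n) (hc2 : A2.card = 2 * n) (hc3 : A3.card = 2 * n)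
    (hd12 : Disjoint A1 A2) (hd13 : Disjoint A1 A3) (hd23 : Disjoint A2 A3)
    (hcover : A1 ∪ A2 ∪ A3 = Finset.univ)
    (a₀ : Fin (6 * n)) (ha₀ : a₀ ∈ A3)
    (R B : SimpleGraph (Option (Fin (6 * n))))
    (hR : ∀ u v : Fin (6 * n), R.Adj (some u) (some v) ↔
      u ≠ v ∧ ((u ∈ A1 ∧ v ∈ A1) ∨ (u ∈ A2 ∧ v ∈ A2) ∨ (u ∈ A3 ∧ v ∈ A3)))
    (hRw : ∀ u : Fin (6 * n), R.Adj none (some u) ↔ u = a₀)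
    (hB : ∀ u v : Fin (6 * n), B.Adj (some u) (some v) ↔
      u ≠ v ∧ ¬((u ∈ A1 ∧ v ∈ A1) ∨ (u ∈ A2 ∧ v ∈ A2) ∨ (u ∈ A3 ∧ v ∈ A3)))
    (hBw : ∀ u : Fin (6 * n), B.Adj none (some u) ↔ u ∈ A1 ∪ A2) :
    (¬ ContainsFan R n ∧ ¬ ContainsK4 B) ∧
    ∀ k : ℕ, 0 < k →
      (∀ R' : SimpleGraph (Option (Fin (6 * n))), R' ≤ KSk (6 * n) k →
        ContainsFan R' n ∨ ContainsK4 (KSk (6 * n) k \ R')) →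
      4 * n + 2 ≤ k :=
  star_critical_lower_bound_general n hn A1 A2 A3 hc1 hc2 hc3 hd12 hd13 hd23 hcover a₀ R B hR hRw hB
    hBw
end

section
/- Let n ≥ 2 be an integer and let K_{6n} be given a red/blue edge-coloring that is (F_n, K_4)-free. Then every vertex v satisfies 2n − 1 ≤ d^R(v) ≤ 2n + 1, where d^R(v) denotes the number of red edges incident to v. Consequently, the number d^B(v) of blue edges incident to v satisfies 4n − 2 ≤ d^B(v) ≤ 4n. -/
open SimpleGraph

/-!
A red neighbourhood holds no red matching of size `n`, since together with the centre it would
form a red `Fₙ`; so a greedy maximal matching leaves a red-independent, i.e. blue, set of all but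
at most `2n - 2` of its vertices. As there is no blue `K₄`, every red degree is at most `2n + 1`.

If some red degree were at most `2n - 2`, take `4n + 1` blue neighbours `B` of that vertex. Then
`B` spans no blue triangle, so blue neighbourhoods inside `B` are red cliques, of size at most `2n`
because a red `K_{2n+1}` contains `Fₙ`. With the first argument, every vertex of `B` has exactly
`2n` red and `2n` blue neighbours in `B`. For `u ∈ B` and a blue neighbour `w` of `u`, the blue
neighbourhood of `w` consists of `u` and all red neighbours of `u` but one, `z`. Any red
neighbour of `z` in `B` other than `u` and `w` would complete a red `Fₙ` centred at `u` or at
`w`, contradicting the red degree `2n > 2` of `z`.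
-/

open Finset

variable {V : Type*} {G : SimpleGraph V}

def HasMatchingIn (G : SimpleGraph V) (S : Finset V) (k : ℕ) : Prop :=
  ∃ m : Fin k × Bool → V, Function.Injective m ∧ (∀ p, m p ∈ S) ∧
    ∀ i, G.Adj (m (i, false)) (m (i, true))

namespace HasMatchingIn

variable {S T : Finset V} {k : ℕ}

theorem zero (G : SimpleGraph V) (S : Finset V) : HasMatchingIn G S 0 :=
  ⟨fun p => p.1.elim0, fun p => p.1.elim0, fun p => p.1.elim0, fun i => i.elim0⟩

theorem mono (h : HasMatchingIn G S k) (hST : S ⊆ T) : HasMatchingIn G T k :=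
  let ⟨m, hinj, hS, hadj⟩ := h
  ⟨m, hinj, fun p => hST (hS p), hadj⟩

theorem insert_insert [DecidableEq V] {x y : V} (h : HasMatchingIn G S k) (hxy : G.Adj x y)
    (hx : x ∉ S) (hy : y ∉ S) : HasMatchingIn G (insert x (insert y S)) (k + 1) := by
  obtain ⟨m, hinj, hS, hadj⟩ := h
  have hmx : ∀ p, m p ≠ x := fun p h => hx (h ▸ hS p)
  have hmy : ∀ p, m p ≠ y := fun p h => hy (h ▸ hS p)
  refine ⟨fun p => Fin.cons (α := fun _ => V) (bif p.2 then y else x) (fun i => m (i, p.2)) p.1,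
    ?_, ?_, ?_⟩
  · rintro ⟨i, a⟩ ⟨j, b⟩ h
    cases i using Fin.cases <;> cases j using Fin.cases <;> cases a <;> cases b <;>
      simp_all [hxy.ne, hxy.ne.symm, hinj.eq_iff, (hmx _).symm, (hmy _).symm]
  · rintro ⟨i, a⟩
    cases i using Fin.cases <;> cases a <;> simp [hS]
  · intro i
    cases i using Fin.cases <;> simp [hxy, hadj]

end HasMatchingIn

theorem hasMatchingIn_or_exists_isIndepSet [DecidableEq V] (G : SimpleGraph V) (k : ℕ)
    (S : Finset V) :
    HasMatchingIn G S k ∨ ∃ U ⊆ S, G.IsIndepSet (U : Set V) ∧ #S + 2 ≤ #U + 2 * k := by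
  induction k generalizing S with
  | zero => exact .inl (.zero G S)
  | succ k ih =>
    by_cases hS : G.IsIndepSet (S : Set V)
    · exact .inr ⟨S, subset_rfl, hS, by omega⟩
    obtain ⟨x, hx, y, hy, -, hxy⟩ : ∃ x ∈ S, ∃ y ∈ S, x ≠ y ∧ G.Adj x y := by
      simpa [isIndepSet_iff, Set.Pairwise] using hS
    have hsub : (S.erase x).erase y ⊆ S := (erase_subset _ _).trans (erase_subset _ _)
    have hS' : #((S.erase x).erase y) + 2 = #S := by
      rw [card_erase_of_mem (mem_erase.2 ⟨hxy.ne.symm, hy⟩), card_erase_of_mem hx]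
      have : 2 ≤ #S := one_lt_card.2 ⟨x, hx, y, hy, hxy.ne⟩
      omega
    rcases ih ((S.erase x).erase y) with hM | ⟨U, hU, hind, hcard⟩
    · refine .inl ((hM.insert_insert hxy (by simp) (by simp)).mono ?_)
      simp [insert_subset_iff, hx, hy, hsub]
    · exact .inr ⟨U, hU.trans hsub, hind, by omega⟩

theorem SimpleGraph.IsNClique.hasMatchingIn [DecidableEq V] {C : Finset V} {k : ℕ}
    (hC : G.IsNClique (2 * k) C) : HasMatchingIn G C k := by
  refine (hasMatchingIn_or_exists_isIndepSet G k C).resolve_right ?_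
  rintro ⟨U, hUC, hind, hcard⟩
  obtain ⟨a, ha, b, hb, hab⟩ := one_lt_card.1 (show 1 < #U by rw [hC.card_eq] at hcard; omega)
  exact hind ha hb hab (hC.isClique (hUC ha) (hUC hb) hab)

theorem containsFan_of_hasMatchingIn {S : Finset V} {c : V} {k : ℕ} (hc : ∀ x ∈ S, G.Adj c x)
    (h : HasMatchingIn G S k) : ContainsFan G k := by
  obtain ⟨m, hinj, hS, hadj⟩ := h
  have hmc : ∀ p, m p ≠ c := fun p => (hc _ (hS p)).ne.symm
  refine ⟨⟨fun o => o.elim c m, ?_⟩, ?_⟩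
  · rintro (_ | p) (_ | q) h
    exacts [rfl, absurd h.symm (hmc q), absurd h (hmc p), congrArg some (hinj h)]
  · rintro (_ | p) (_ | q) ⟨hne, hpq⟩
    · exact absurd rfl hne
    · exact hc _ (hS q)
    · exact (hc _ (hS p)).symm
    · obtain ⟨i, a, b, rfl, rfl⟩ : ∃ i a b, p = (i, a) ∧ q = (i, b) := by simpa using hpq
      cases a <;> cases b
      exacts [absurd rfl hne, hadj i, (hadj i).symm, absurd rfl hne]

theorem SimpleGraph.IsClique.card_le_of_not_containsFan [DecidableEq V] {C : Finset V} {n : ℕ}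
    (hC : G.IsClique (C : Set V)) (hF : ¬ContainsFan G n) : #C ≤ 2 * n := by
  by_contra! hlt
  obtain ⟨D, hDC, hD⟩ := exists_subset_card_eq (show 2 * n + 1 ≤ #C by omega)
  obtain ⟨c, hc⟩ : D.Nonempty := by rw [← card_pos, hD]; omega
  have hDclique : G.IsNClique (2 * n + 1) D := ⟨hC.subset (by simpa using hDC), hD⟩
  exact hF (containsFan_of_hasMatchingIn (fun x hx => hDclique.isClique hc (mem_of_mem_erase hx)
    (ne_of_mem_erase hx).symm) (hDclique.erase_of_mem hc).hasMatchingIn)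

theorem containsFan_of_isNClique_of_adj [DecidableEq V] {C : Finset V} {c z t : V} {k : ℕ}
    (hC : G.IsNClique (2 * k + 1) C) (hcC : ∀ x ∈ C, G.Adj c x) (hcz : G.Adj c z) (hzC : z ∉ C)
    (ht : t ∈ C) (hzt : G.Adj z t) : ContainsFan G (k + 1) := by
  have hM := (hC.erase_of_mem ht).hasMatchingIn.insert_insert hzt
    (fun h => hzC (mem_of_mem_erase h)) (by simp)
  refine containsFan_of_hasMatchingIn (c := c) ?_ hM
  simp only [mem_insert, insert_erase ht]
  rintro x (rfl | hx)
  exacts [hcz, hcC x hx]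

theorem SimpleGraph.IsIndepSet.card_lt_of_indepSetFreeOn {s : Set V} {U : Finset V} {m : ℕ}
    (hU : G.IsIndepSet (U : Set V)) (hUs : (U : Set V) ⊆ s) (h : G.IndepSetFreeOn s m) :
    #U < m := by
  by_contra! hm
  obtain ⟨t, htU, ht⟩ := exists_subset_card_eq hm
  have htU' : (t : Set V) ⊆ U := by simpa using htU
  exact h (htU'.trans hUs) ⟨hU.mono htU', ht⟩

theorem card_add_three_le_of_not_containsFan [DecidableEq V] {S : Finset V} {c : V} {n m : ℕ}
    (hc : ∀ x ∈ S, G.Adj c x) (hF : ¬ContainsFan G n) (hS : G.IndepSetFreeOn S m) :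
    #S + 3 ≤ 2 * n + m := by
  rcases hasMatchingIn_or_exists_isIndepSet G n S with hM | ⟨U, hUS, hU, hcard⟩
  · exact (hF (containsFan_of_hasMatchingIn hc hM)).elim
  · have := hU.card_lt_of_indepSetFreeOn (by simpa using hUS) hS
    omega

theorem degree_le_of_not_containsFan [Fintype V] [DecidableEq V] [DecidableRel G.Adj] {n : ℕ}
    (hF : ¬ContainsFan G n) (hK : G.IndepSetFree 4) (v : V) : G.degree v ≤ 2 * n + 1 := by
  have := card_add_three_le_of_not_containsFan (S := G.neighborFinset v)
    (fun x hx => (G.mem_neighborFinset v x).1 hx) hF (fun t _ => hK t)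
  rw [card_neighborFinset_eq_degree] at this
  omega

theorem Finset.exists_erase_eq_erase_of_card_eq [DecidableEq V] {N P : Finset V} {u : V}
    (huP : u ∈ P) (huN : u ∉ N) (hPN : P.erase u ⊆ N) (hcard : #N = #P) :
    ∃ z ∈ N, z ∉ P ∧ N.erase z = P.erase u := by
  obtain ⟨z, hzN, hzP⟩ := exists_mem_notMem_of_card_lt_card (s := P.erase u) (t := N) (by
    rw [card_erase_of_mem huP, hcard]; have := card_pos.2 ⟨u, huP⟩; omega)
  have hzu : z ≠ u := fun h => huN (h ▸ hzN)
  refine ⟨z, hzN, fun h => hzP (mem_erase.2 ⟨hzu, h⟩), ?_⟩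
  refine (eq_of_subset_of_card_le (fun y hy => mem_erase.2 ⟨?_, hPN hy⟩) ?_).symm
  · exact fun h => hzP (h ▸ hy)
  · rw [card_erase_of_mem hzN, card_erase_of_mem huP, hcard]

section InFinset

variable [DecidableEq V] [DecidableRel G.Adj] {B : Finset V}

theorem card_filter_adj_add_card_filter_compl_adj {x : V} (hx : x ∈ B) :
    #{y ∈ B | G.Adj x y} + #{y ∈ B | Gᶜ.Adj x y} + 1 = #B := by
  have hsplit := card_filter_add_card_filter_not (s := B) (G.Adj x)
  have hnot : {y ∈ B | ¬G.Adj x y} = insert x {y ∈ B | Gᶜ.Adj x y} := by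
    ext y
    by_cases hy : y = x
    · simp [hy, hx]
    · simp [hy, compl_adj, Ne.symm hy]
  rw [hnot, card_insert_of_notMem (by simp)] at hsplit
  omega

theorem containsFan_of_forall_card_filter_adj {n : ℕ} (hn : 2 ≤ n)
    (hred : ∀ x ∈ B, #{y ∈ B | G.Adj x y} = 2 * n)
    (hblue : ∀ x ∈ B, G.IsNClique (2 * n) {y ∈ B | Gᶜ.Adj x y}) {u : V} (hu : u ∈ B) :
    ContainsFan G n := by
  by_contra hF
  obtain ⟨k, rfl⟩ : ∃ k, n = k + 1 := ⟨n - 1, by omega⟩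
  set N := {y ∈ B | G.Adj u y}
  set W := {y ∈ B | Gᶜ.Adj u y}
  obtain ⟨w, hw⟩ : W.Nonempty := by rw [← card_pos, (hblue u hu).card_eq]; omega
  obtain ⟨hwB, huw⟩ := mem_filter.1 hw
  set P := {y ∈ B | Gᶜ.Adj w y}
  have huP : u ∈ P := mem_filter.2 ⟨hu, huw.symm⟩
  -- `P \ {u}` avoids `W`, since `W` is a red clique through `w`
  have hPN : P.erase u ⊆ N := by
    intro y hy
    obtain ⟨hyu, hyB, hwy⟩ : y ≠ u ∧ y ∈ B ∧ Gᶜ.Adj w y := by simpa [P] using hy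
    refine mem_filter.2 ⟨hyB, ?_⟩
    by_contra hnuy
    have hyW : y ∈ W := mem_filter.2 ⟨hyB, (G.compl_adj u y).2 ⟨hyu.symm, hnuy⟩⟩
    exact ((G.compl_adj w y).1 hwy).2 ((hblue u hu).isClique hw hyW ((G.compl_adj w y).1 hwy).1)
  obtain ⟨z, hzN, hzP, hNP⟩ := exists_erase_eq_erase_of_card_eq huP (by simp [N]) hPN
    (by rw [hred u hu, (hblue w hwB).card_eq])
  obtain ⟨hzB, huz⟩ := mem_filter.1 hzN
  have hzW : z ∉ W := fun h => ((G.compl_adj u z).1 (mem_filter.1 h).2).2 huz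
  have hwz : G.Adj w z := by
    by_contra hnwz
    exact hzP (mem_filter.2 ⟨hzB, (G.compl_adj w z).2 ⟨fun h => hzW (h ▸ hw), hnwz⟩⟩)
  have hNclique : G.IsNClique (2 * k + 1) (N.erase z) := by
    rw [hNP]; convert (hblue w hwB).erase_of_mem huP using 1; omega
  have hWclique : G.IsNClique (2 * k + 1) (W.erase w) := by
    convert (hblue u hu).erase_of_mem hw using 1; omega
  have hzred : {y ∈ B | G.Adj z y} ⊆ {u, w} := by
    intro x hx
    obtain ⟨hxB, hzx⟩ := mem_filter.1 hx
    by_contra hxuw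
    obtain ⟨hxu, hxw⟩ : x ≠ u ∧ x ≠ w := by simpa using hxuw
    by_cases hux : G.Adj u x
    · exact hF (containsFan_of_isNClique_of_adj hNclique
        (fun y hy => (mem_filter.1 (mem_of_mem_erase hy)).2) huz (by simp)
        (mem_erase.2 ⟨hzx.ne.symm, mem_filter.2 ⟨hxB, hux⟩⟩) hzx)
    · have hxW : x ∈ W := mem_filter.2 ⟨hxB, (G.compl_adj u x).2 ⟨hxu.symm, hux⟩⟩
      exact hF (containsFan_of_isNClique_of_adj hWclique
        (fun y hy => (hblue u hu).isClique hw (mem_of_mem_erase hy) (ne_of_mem_erase hy).symm)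
        hwz (fun h => hzW (mem_of_mem_erase h)) (mem_erase.2 ⟨hxw, hxW⟩) hzx)
  have := (card_le_card hzred).trans (card_le_two (a := u) (b := w))
  rw [hred z hzB] at this
  omega

theorem containsFan_of_indepSetFreeOn {n : ℕ} (hn : 2 ≤ n) (hB : #B = 4 * n + 1)
    (hT : G.IndepSetFreeOn B 3) : ContainsFan G n := by
  by_contra hF
  have hclique : ∀ x ∈ B, G.IsClique ({y ∈ B | Gᶜ.Adj x y} : Finset V) := by
    intro x hx a ha b hb hab
    by_contra hnab
    simp only [coe_filter, Set.mem_ofPred_eq] at ha hb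
    refine hT (t := {x, a, b}) (by simp [Set.insert_subset_iff, hx, ha.1, hb.1]) ?_
    rw [← isNClique_compl, is3Clique_triple_iff]
    exact ⟨ha.2, hb.2, (G.compl_adj a b).2 ⟨hab, hnab⟩⟩
  have hred : ∀ x ∈ B, #{y ∈ B | G.Adj x y} = 2 * n := by
    intro x hx
    have hsum := card_filter_adj_add_card_filter_compl_adj (G := G) hx
    have hle := card_add_three_le_of_not_containsFan (S := {y ∈ B | G.Adj x y})
      (fun y hy => (mem_filter.1 hy).2) hF
      (fun t ht => hT (ht.trans (coe_subset.2 (filter_subset _ _))))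
    have hblue := (hclique x hx).card_le_of_not_containsFan hF
    omega
  obtain ⟨u, hu⟩ : B.Nonempty := by rw [← card_pos]; omega
  refine hF (containsFan_of_forall_card_filter_adj hn hred (fun x hx => ⟨hclique x hx, ?_⟩) hu)
  have := card_filter_adj_add_card_filter_compl_adj (G := G) hx
  rw [hred x hx] at this
  omega

end InFinset

theorem le_degree_of_not_containsFan [Fintype V] [DecidableEq V] [DecidableRel G.Adj] {n : ℕ}
    (hn : 2 ≤ n) (hV : Fintype.card V = 6 * n) (hF : ¬ContainsFan G n) (hK : G.IndepSetFree 4)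
    (v : V) : 2 * n - 1 ≤ G.degree v := by
  by_contra! hlt
  have hblue : 4 * n + 1 ≤ #(Gᶜ.neighborFinset v) := by
    rw [card_neighborFinset_eq_degree, degree_compl, hV]; omega
  obtain ⟨B, hBv, hB⟩ := exists_subset_card_eq hblue
  refine hF (containsFan_of_indepSetFreeOn hn hB fun t ht hind => hK (insert v t) ?_)
  rw [← isNClique_compl] at hind ⊢
  exact hind.insert fun b hb => (Gᶜ.mem_neighborFinset v b).1 (hBv (by simpa using ht hb))

theorem cliqueFree_four_of_not_containsK4 [DecidableEq V] (h : ¬ContainsK4 G) :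
    G.CliqueFree 4 := by
  intro s hs
  obtain ⟨a, b, c, d, hab, hac, had, hbc, hbd, hcd, rfl⟩ := card_eq_four.1 hs.card_eq
  have hK := hs.isClique
  exact h ⟨a, b, c, d, hK (by simp) (by simp) hab, hK (by simp) (by simp) hac,
    hK (by simp) (by simp) had, hK (by simp) (by simp) hbc, hK (by simp) (by simp) hbd,
    hK (by simp) (by simp) hcd⟩

/-- In an `(Fₙ, K₄)`-free red/blue coloring of `K_{6n}` (red subgraph `R`, blue
subgraph `Rᶜ`), every vertex has red degree between `2n - 1` and `2n + 1`, and
consequently blue degree between `4n - 2` and `4n`. -/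
theorem degree_bounds_free_coloring (n : ℕ) (hn : 2 ≤ n)
    (R : SimpleGraph (Fin (6 * n))) [DecidableRel R.Adj]
    (hfree : ¬ ContainsFan R n ∧ ¬ ContainsK4 Rᶜ) (v : Fin (6 * n)) :
    (2 * n - 1 ≤ R.degree v ∧ R.degree v ≤ 2 * n + 1) ∧
    (4 * n - 2 ≤ Rᶜ.degree v ∧ Rᶜ.degree v ≤ 4 * n) := by
  obtain ⟨hF, hK⟩ := hfree
  have hI : R.IndepSetFree 4 :=
    R.cliqueFree_compl.1 (cliqueFree_four_of_not_containsK4 hK)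
  have hlow := le_degree_of_not_containsFan hn (Fintype.card_fin _) hF hI v
  have hup := degree_le_of_not_containsFan hF hI v
  have hcompl := R.degree_compl (v := v)
  rw [Fintype.card_fin] at hcompl
  omega
end

section
/- Let n ≥ 2 be an integer, let K_{6n} be given a red/blue edge-coloring that is (F_n, K_4)-free, and suppose there is a set K of 2n vertices all of whose internal edges are red (a red clique of order 2n). Then the coloring restricted to the remaining 4n vertices (those outside K) contains no blue triangle. -/
open SimpleGraph

/-!
A vertex `x` outside the red clique `K` has at most one red neighbour in `K`: if `x` were red
to `u ≠ w` in `K`, then `u` would be the center of a red fan whose triangles use the edge `xw`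
and a perfect matching of the `2n - 2` vertices of `K \ {u, w}`. Hence the three vertices of a
blue triangle outside `K` have at most three red neighbours in `K` together, and since
`|K| = 2n ≥ 4` some vertex of `K` is blue to all three of them, giving a blue `K₄`.
-/

open Finset

namespace SimpleGraph

variable {V : Type*} {G : SimpleGraph V} {n : ℕ}

theorem containsFan_of_forall_adj (f : Fin n × Bool ↪ V) (c : V) (hc : ∀ p, G.Adj c (f p))
    (hf : ∀ i a, G.Adj (f (i, a)) (f (i, !a))) : ContainsFan G n := by
  refine ⟨f.optionElim c fun ⟨p, hp⟩ ↦ (hc p).ne hp.symm, ?_⟩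
  rintro (_ | p) (_ | q) ⟨hpq, hpq'⟩
  · exact absurd rfl hpq
  · exact hc q
  · exact (hc p).symm
  · obtain ⟨i, a, b, rfl, rfl⟩ : ∃ i a b, p = (i, a) ∧ q = (i, b) := by simpa using hpq'
    obtain rfl : b = !a := by cases a <;> cases b <;> simp_all
    exact hf i a

theorem containsFan_of_isClique_of_adj_of_adj [DecidableEq V] {K : Finset V} (hKG : G.IsClique K)
    (hK : #K = 2 * n) {x u w : V} (hx : x ∉ K) (hu : u ∈ K) (hw : w ∈ K) (huw : u ≠ w)
    (hxu : G.Adj x u) (hxw : G.Adj x w) : ContainsFan G n := by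
  set T := insert x (K.erase u)
  have hT : Fintype.card (Fin n × Bool) = Fintype.card T := by
    have : #(K.erase u) + 1 = 2 * n := by
      have := card_pos.2 ⟨u, hu⟩
      rw [card_erase_of_mem hu]; omega
    simp [T, card_insert_of_notMem (fun h ↦ hx (mem_of_mem_erase h)), this, mul_comm]
  let e := Fintype.equivOfCardEq hT
  have hxT : x ∈ T := mem_insert_self x _
  have hwT : w ∈ T := mem_insert_of_mem (mem_erase.2 ⟨huw.symm, hw⟩)
  set q := e.symm ⟨w, hwT⟩
  -- re-enumerate `T` so that `x` becomes the partner `(q.1, !q.2)` of `w`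
  let σ := (Equiv.swap (q.1, !q.2) (e.symm ⟨x, hxT⟩)).trans e
  let f : Fin n × Bool ↪ V := σ.toEmbedding.trans (.subtype _)
  have hfT (p) : f p = x ∨ f p ≠ u ∧ f p ∈ K := by
    have : f p ∈ T := (σ p).2
    simpa [T] using this
  have hfx : f (q.1, !q.2) = x := by simp [f, σ]
  have hfw : f q = w := by
    have hqx : q ≠ e.symm ⟨x, hxT⟩ := fun h ↦ hxw.ne (by simpa [q] using congrArg e h.symm)
    have hq : q ≠ (q.1, !q.2) := by simp [Prod.ext_iff]
    simp [f, σ, Equiv.swap_apply_of_ne_of_ne hq hqx, q]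
  have hpartner (i a) (h : f (i, a) = x) : f (i, !a) = w := by
    obtain ⟨rfl, rfl⟩ := Prod.ext_iff.1 (f.injective (h.trans hfx.symm))
    simpa using hfw
  refine containsFan_of_forall_adj f u (fun p ↦ ?_) (fun i a ↦ ?_)
  · obtain h | ⟨hpu, hpK⟩ := hfT p
    · exact h ▸ hxu.symm
    · exact hKG hu hpK hpu.symm
  · by_cases ha : f (i, a) = x
    · rw [ha, hpartner i a ha]; exact hxw
    by_cases ha' : f (i, !a) = x
    · have hw' := hpartner i (!a) ha'
      rw [Bool.not_not] at hw'
      rw [ha', hw']; exact hxw.symm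
    exact hKG ((hfT _).resolve_left ha).2 ((hfT _).resolve_left ha').2
      (f.injective.ne (by simp))

theorem card_filter_adj_le_one [DecidableEq V] [DecidableRel G.Adj] (hfan : ¬ContainsFan G n)
    {K : Finset V} (hKG : G.IsClique K) (hK : #K = 2 * n) {x : V} (hx : x ∉ K) :
    #{k ∈ K | G.Adj x k} ≤ 1 := by
  by_contra! h
  obtain ⟨u, hu, w, hw, huw⟩ := one_lt_card.1 h
  rw [mem_filter] at hu hw
  exact hfan (containsFan_of_isClique_of_adj_of_adj hKG hK hx hu.1 hw.1 huw hu.2 hw.2)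

theorem exists_mem_forall_not_adj [DecidableEq V] [DecidableRel G.Adj] {S K : Finset V}
    (hS : ∀ v ∈ S, #{k ∈ K | G.Adj v k} ≤ 1) (hSK : #S < #K) :
    ∃ k ∈ K, ∀ v ∈ S, ¬G.Adj v k := by
  have : #(S.biUnion fun v ↦ {k ∈ K | G.Adj v k}) < #K :=
    calc _ ≤ ∑ v ∈ S, #{k ∈ K | G.Adj v k} := card_biUnion_le
      _ ≤ #S := by simpa using sum_le_card_nsmul S _ 1 hS
      _ < #K := hSK
  obtain ⟨k, hkK, hk⟩ := exists_mem_notMem_of_card_lt_card this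
  exact ⟨k, hkK, fun v hv hvk ↦ hk (mem_biUnion.2 ⟨v, hv, mem_filter.2 ⟨hkK, hvk⟩⟩)⟩

end SimpleGraph

/-- If an `(Fₙ, K₄)`-free coloring of `K_{6n}` (`n ≥ 2`) contains a red clique `K`
of order `2n`, then there is no blue triangle among the vertices outside `K`. -/
theorem no_blue_triangle_outside (n : ℕ) (hn : 2 ≤ n)
    (R : SimpleGraph (Fin (6 * n)))
    (hfree : ¬ ContainsFan R n ∧ ¬ ContainsK4 Rᶜ)
    (K : Finset (Fin (6 * n))) (hKcard : K.card = 2 * n) (hKred : R.IsClique ↑K) :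
    ∀ a b c : Fin (6 * n), a ∉ K → b ∉ K → c ∉ K →
      ¬ (Rᶜ.Adj a b ∧ Rᶜ.Adj a c ∧ Rᶜ.Adj b c) := by
  classical
  rintro a b c ha hb hc ⟨hab, hac, hbc⟩
  have hS : ∀ v ∈ ({a, b, c} : Finset _), #{k ∈ K | R.Adj v k} ≤ 1 := by
    simp only [mem_insert, mem_singleton]
    rintro v (rfl | rfl | rfl) <;> exact card_filter_adj_le_one hfree.1 hKred hKcard ‹_›
  have hSK : #{a, b, c} < #K := by have := card_le_three (a := a) (b := b) (c := c); omega
  obtain ⟨k, hkK, hk⟩ := exists_mem_forall_not_adj hS hSK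
  have hblue (v) (hv : v ∈ ({a, b, c} : Finset _)) (hvK : v ∉ K) : Rᶜ.Adj k v :=
    ⟨fun h ↦ hvK (h ▸ hkK), fun h ↦ hk v hv h.symm⟩
  exact hfree.2 ⟨k, a, b, c, hblue a (by simp) ha, hblue b (by simp) hb, hblue c (by simp) hc,
    hab, hac, hbc⟩
end

section
/- Let n ≥ 4 be an integer, let K_{6n} be given a red/blue edge-coloring that is (F_n, K_4)-free, and suppose there is a set K of 2n vertices all of whose internal edges are red. If C_t is a shortest blue cycle of odd length among the vertices outside K, then t = 5 or t = 7. -/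
open SimpleGraph

/-!
Write `t = c.length`. A vertex `u ∉ K` with two red neighbours `k₁, k₂` in the red clique `K`
completes a red `Fₙ` centred at `k₁` (the blade `u k₂` plus `n - 1` blades inside `K`). Hence a
blue triangle outside `K` would have a common blue neighbour in `K`, i.e. a blue `K₄`; so `t ≠ 3`.

Suppose `t = 2s + 3 ≥ 9`. A blue chord of `c`, or a vertex `w ∉ K` off the cycle with three blue
neighbours on it, closes a shorter odd closed walk. So all chords are red, which gives every cycle
vertex a red fan with `s` blades on the cycle, and every `w` in the set `W` of the `≥ 4n - t`
remaining vertices has at least `t - 2` red neighbours on the cycle. Since `W` spans no blue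
triangle, a greedy matching shows that a cycle vertex has at most `2(n - s)` red neighbours in `W`.
Double counting gives `(4n - t)(t - 2) ≤ 2t(n - s)`, which is false for `s ≥ 3`.
-/

open Finset

namespace SimpleGraph

variable {V : Type*}

section Fans

variable {R : SimpleGraph V} {z : V} {m n : ℕ} {D D' : Set V}

/-- A copy of `Fₘ` in `R` centred at `z` with all its other vertices in `D`. -/
def HasFan (R : SimpleGraph V) (z : V) (m : ℕ) (D : Set V) : Prop :=
  ∃ g : Fin m × Bool → V, Function.Injective g ∧ (∀ x, g x ∈ D) ∧ (∀ x, R.Adj z (g x)) ∧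
    ∀ i, R.Adj (g (i, false)) (g (i, true))

theorem HasFan.containsFan (h : R.HasFan z m D) (hnm : n ≤ m) : ContainsFan R n := by
  obtain ⟨g, hg, -, hz, hblade⟩ := h
  let e : Fin n × Bool ↪ V :=
    ((Fin.castLEEmb hnm).prodMap (Function.Embedding.refl Bool)).trans ⟨g, hg⟩
  refine ⟨e.optionElim z fun ⟨x, hx⟩ => (hz _).ne hx.symm, ?_⟩
  rintro (_ | ⟨i, a⟩) (_ | ⟨j, b⟩) ⟨hne, h⟩
  · exact absurd rfl hne
  · exact hz _
  · exact (hz _).symm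
  · obtain ⟨k, a', b', hu, hv⟩ := h.resolve_left (by simp) |>.resolve_left (by simp)
    simp only [Option.some.injEq, Prod.mk.injEq] at hu hv
    obtain ⟨rfl, rfl⟩ := hu
    obtain ⟨rfl, rfl⟩ := hv
    cases a <;> cases b
    · exact absurd rfl hne
    · exact hblade _
    · exact (hblade _).symm
    · exact absurd rfl hne

theorem HasFan.mono (h : R.HasFan z m D) (hD : D ⊆ D') : R.HasFan z m D' :=
  let ⟨g, hg, hgD, hz, hblade⟩ := h
  ⟨g, hg, fun x => hD (hgD x), hz, hblade⟩

theorem HasFan.add {m₁ m₂ : ℕ} {D₁ D₂ : Set V} (h₁ : R.HasFan z m₁ D₁) (h₂ : R.HasFan z m₂ D₂)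
    (hD : Disjoint D₁ D₂) : R.HasFan z (m₁ + m₂) (D₁ ∪ D₂) := by
  obtain ⟨g₁, hg₁, hg₁D, hz₁, hblade₁⟩ := h₁
  obtain ⟨g₂, hg₂, hg₂D, hz₂, hblade₂⟩ := h₂
  let e : Fin (m₁ + m₂) × Bool ≃ Fin m₁ × Bool ⊕ Fin m₂ × Bool :=
    (finSumFinEquiv.symm.prodCongr (Equiv.refl Bool)).trans (Equiv.sumProdDistrib _ _ _)
  refine ⟨Sum.elim g₁ g₂ ∘ e, (hg₁.sumElim hg₂ fun x y h => ?_).comp e.injective, ?_, ?_, ?_⟩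
  · exact hD.ne_of_mem (hg₁D x) (hg₂D y) h
  · rintro ⟨i, b⟩
    induction i using Fin.addCases <;> simp [e, hg₁D, hg₂D]
  · rintro ⟨i, b⟩
    induction i using Fin.addCases <;> simp [e, hz₁, hz₂]
  · intro i
    induction i using Fin.addCases <;> simp [e, hblade₁, hblade₂]

theorem hasFan_pair {x y : V} (hx : R.Adj z x) (hy : R.Adj z y) (hxy : R.Adj x y) :
    R.HasFan z 1 {x, y} := by
  refine ⟨fun p => if p.2 then y else x, ?_, ?_, ?_, fun _ => hxy⟩
  · rintro ⟨i, a⟩ ⟨j, b⟩ h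
    rw [Subsingleton.elim i j]
    cases a <;> cases b <;> simp_all [hxy.ne, hxy.ne.symm]
  · rintro ⟨_, _ | _⟩ <;> simp
  · rintro ⟨_, _ | _⟩ <;> simpa

theorem hasFan_of_forall_exists_adj [DecidableEq V] {k : ℕ} :
    ∀ {m : ℕ} {D : Finset V}, (∀ x ∈ D, R.Adj z x) →
      (∀ E ⊆ D, k ≤ #E → ∃ x ∈ E, ∃ y ∈ E, R.Adj x y) → 2 * m + k ≤ #D + 2 →
      R.HasFan z m D
  | 0, _, _, _, _ => ⟨fun p => p.1.elim0, fun p => p.1.elim0, fun p => p.1.elim0,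
      fun p => p.1.elim0, fun i => i.elim0⟩
  | m + 1, D, hz, hD, hm => by
    obtain ⟨x, hx, y, hy, hxy⟩ := hD D subset_rfl (by omega)
    have hyx : y ∈ D.erase x := mem_erase.mpr ⟨hxy.ne.symm, hy⟩
    have hcard : #((D.erase x).erase y) + 2 = #D := by
      have := card_erase_add_one hyx
      have := card_erase_add_one hx
      omega
    have hsub : (D.erase x).erase y ⊆ D := (erase_subset _ _).trans (erase_subset _ _)
    have ih := hasFan_of_forall_exists_adj (m := m) (fun w hw => hz w (hsub hw))
      (fun E hE => hD E (hE.trans hsub)) (by omega)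
    refine (ih.add (hasFan_pair (hz x hx) (hz y hy) hxy) ?_).mono ?_
    · simp [Set.disjoint_insert_right]
    · simp [Set.insert_subset_iff, hx, hy]

theorem HasFan.card_filter_adj_le [DecidableEq V] [DecidableRel R.Adj] (hfan : ¬ContainsFan R n)
    {x : V} {s : ℕ} (h : R.HasFan x s D) {W : Finset V} (hWD : Disjoint (↑W) D)
    (hW : ∀ a ∈ W, ∀ b ∈ W, ∀ c ∈ W, a ≠ b → a ≠ c → b ≠ c → R.Adj a b ∨ R.Adj a c ∨ R.Adj b c) :
    #{w ∈ W | R.Adj w x} ≤ 2 * (n - s) := by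
  by_contra! hbig
  have hW' : R.HasFan x (n - s) ↑{w ∈ W | R.Adj w x} :=
    hasFan_of_forall_exists_adj (k := 3) (fun w hw => (mem_filter.mp hw).2.symm)
      (fun E hE hE3 => by
        obtain ⟨a, ha, b, hb, c, hc, hab, hac, hbc⟩ := two_lt_card.mp hE3
        have hmem := fun y (hy : y ∈ E) => (mem_filter.mp (hE hy)).1
        rcases hW a (hmem a ha) b (hmem b hb) c (hmem c hc) hab hac hbc with h | h | h
        exacts [⟨a, ha, b, hb, h⟩, ⟨a, ha, c, hc, h⟩, ⟨b, hb, c, hc, h⟩])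
      (by omega)
  refine hfan ((h.add hW' ?_).containsFan (by omega))
  exact hWD.symm.mono_right (coe_subset.mpr (filter_subset _ _))

end Fans

section RedClique

variable [DecidableEq V] {R : SimpleGraph V} {n : ℕ} {K : Finset V}

theorem card_filter_adj_le_one_of_isClique [DecidableRel R.Adj] (hfan : ¬ContainsFan R n)
    (hK : R.IsClique ↑K) (hcard : 2 * n ≤ #K) {v : V} (hv : v ∉ K) :
    #{k ∈ K | R.Adj v k} ≤ 1 := by
  refine card_le_one.mpr fun k₁ hk₁ k₂ hk₂ => by_contra fun hne => hfan ?_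
  simp only [mem_filter] at hk₁ hk₂
  have hE : #((K.erase k₁).erase k₂) + 2 = #K := by
    have := card_erase_add_one (mem_erase.mpr ⟨Ne.symm hne, hk₂.1⟩)
    have := card_erase_add_one hk₁.1
    omega
  set E := (K.erase k₁).erase k₂
  have hEK : E ⊆ K := (erase_subset _ _).trans (erase_subset _ _)
  have hpair := hasFan_pair hk₁.2.symm (hK hk₁.1 hk₂.1 hne) hk₂.2
  have hrest : R.HasFan k₁ (n - 1) E :=
    hasFan_of_forall_exists_adj (k := 2)
      (fun x hx => hK hk₁.1 (hEK hx) (by rintro rfl; simp [E] at hx))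
      (fun F hF hF2 => by
        obtain ⟨x, hx, y, hy, hxy⟩ := one_lt_card.mp hF2
        exact ⟨x, hx, y, hy, hK (hEK (hF hx)) (hEK (hF hy)) hxy⟩)
      (by omega)
  refine (hpair.add hrest ?_).containsFan (by omega)
  simp [E, Set.disjoint_insert_left, hv]

theorem adj_or_adj_or_adj_of_notMem (hn : 2 ≤ n) (hfan : ¬ContainsFan R n)
    (hK4 : ¬ContainsK4 Rᶜ) (hK : R.IsClique ↑K) (hcard : 2 * n ≤ #K) {x y z : V} (hx : x ∉ K)
    (hy : y ∉ K) (hz : z ∉ K) (hxy : x ≠ y) (hxz : x ≠ z) (hyz : y ≠ z) :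
    R.Adj x y ∨ R.Adj x z ∨ R.Adj y z := by
  classical
  by_contra! h
  have hcover : K ⊆ {k ∈ K | R.Adj x k} ∪ {k ∈ K | R.Adj y k} ∪ {k ∈ K | R.Adj z k} := by
    intro k hk
    by_contra hk'
    simp only [mem_union, mem_filter, hk, true_and, not_or] at hk'
    refine hK4 ⟨k, x, y, z, ?_, ?_, ?_, ?_, ?_, ?_⟩ <;> simp only [compl_adj, R.adj_comm k] <;>
      exact ⟨by rintro rfl; contradiction, by tauto⟩
  have := card_le_card hcover
  have := card_union_le ({k ∈ K | R.Adj x k} ∪ {k ∈ K | R.Adj y k}) {k ∈ K | R.Adj z k}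
  have := card_union_le {k ∈ K | R.Adj x k} {k ∈ K | R.Adj y k}
  have := card_filter_adj_le_one_of_isClique hfan hK hcard hx
  have := card_filter_adj_le_one_of_isClique hfan hK hcard hy
  have := card_filter_adj_le_one_of_isClique hfan hK hcard hz
  omega

end RedClique

namespace Walk

variable {G : SimpleGraph V}

theorem exists_odd_length_lt_of_not_isPath_tail {u : V} (p : G.Walk u u) (hp : Odd p.length)
    (hpath : ¬p.tail.IsPath) :
    ∃ (w : V) (q : G.Walk w w), Odd q.length ∧ q.length < p.length ∧ q.support ⊆ p.support := by
  rw [← IsPath.getVert_injOn_iff] at hpath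
  obtain ⟨a, b, hab, ha, hlt, hb⟩ : ∃ a b, p.getVert a = p.getVert b ∧ 1 ≤ a ∧ a < b ∧
      b ≤ p.length := by
    simp only [Set.InjOn, Set.mem_ofPred_eq, getVert_tail, length_tail, not_forall] at hpath
    obtain ⟨i, hi, j, hj, hij, hne⟩ := hpath
    rcases Nat.lt_or_gt_of_ne hne with h | h
    · exact ⟨i + 1, j + 1, hij, by omega, by omega, by omega⟩
    · exact ⟨j + 1, i + 1, hij.symm, by omega, by omega, by omega⟩
  -- `p` splits at the repeated vertex into two closed walks whose lengths add up to `p.length`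
  rcases Nat.even_or_odd (b - a) with heven | hodd
  · refine ⟨u, (p.take a).append ((p.drop b).copy hab.symm rfl), ?_, ?_, fun x hx => ?_⟩
    · rw [Nat.even_iff] at heven
      rw [Nat.odd_iff] at hp ⊢
      simp only [length_append, length_copy, take_length, drop_length]
      omega
    · simp only [length_append, length_copy, take_length, drop_length]
      omega
    · rcases (mem_support_append_iff _ _).mp hx with hx | hx
      · exact (isSubwalk_take p a).support_subset hx
      · rw [support_copy] at hx
        exact (isSubwalk_drop p b).support_subset hx
  · refine ⟨p.getVert b,
      ((p.take b).drop a).copy (by rw [take_getVert, min_eq_right hlt.le, hab]) rfl, ?_, ?_, ?_⟩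
    · simpa [take_length, drop_length, hb] using hodd
    · simp only [length_copy, take_length, drop_length]
      omega
    · rw [support_copy]
      exact ((isSubwalk_drop _ a).trans (isSubwalk_take p b)).support_subset

theorem exists_isCycle_odd_length_le {u : V} (p : G.Walk u u) (hp : Odd p.length) :
    ∃ (w : V) (q : G.Walk w w), q.IsCycle ∧ Odd q.length ∧ q.length ≤ p.length ∧
      q.support ⊆ p.support := by
  induction hL : p.length using Nat.strong_induction_on generalizing u with
  | _ L ih =>
  subst hL
  by_cases hpath : p.tail.IsPath
  · have hL1 : p.length ≠ 1 := fun h1 => by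
      have h := p.adj_getVert_succ (i := 0) (by omega)
      rw [zero_add, ← h1, getVert_length, getVert_zero] at h
      exact h.ne rfl
    refine ⟨u, p, isCycle_iff_isPath_tail_and_le_length.mpr ⟨hpath, ?_⟩, hp, le_rfl,
      fun _ h => h⟩
    obtain ⟨k, hk⟩ := hp
    omega
  obtain ⟨w, q, hq, hlt, hsub⟩ := p.exists_odd_length_lt_of_not_isPath_tail hp hpath
  obtain ⟨w', q', hq', hodd', hle', hsub'⟩ := ih q.length hlt q hq rfl
  exact ⟨w', q', hq', hodd', hle'.trans hlt.le, fun x hx => hsub (hsub' hx)⟩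

theorem IsCycle.card_support_toFinset [DecidableEq V] {v : V} {c : G.Walk v v}
    (hc : c.IsCycle) : #c.support.toFinset = c.length := by
  rw [← c.cons_tail_support, List.toFinset_cons,
    insert_eq_of_mem (List.mem_toFinset.mpr (end_mem_tail_support hc.not_nil)),
    List.toFinset_card_of_nodup hc.support_nodup, List.length_tail, length_support]
  rfl

structure IsShortestOddIn (S : Set V) {v : V} (c : G.Walk v v) : Prop where
  odd_length : Odd c.length
  support_subset : ∀ x ∈ c.support, x ∈ S
  length_le : ∀ ⦃u : V⦄ (p : G.Walk u u), Odd p.length → (∀ x ∈ p.support, x ∈ S) →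
    c.length ≤ p.length

theorem isShortestOddIn_of_forall_isCycle {S : Set V} {v : V} {c : G.Walk v v}
    (hodd : Odd c.length) (hcS : ∀ x ∈ c.support, x ∈ S)
    (hmin : ∀ (u : V) (d : G.Walk u u), d.IsCycle → Odd d.length → (∀ x ∈ d.support, x ∈ S) →
      c.length ≤ d.length) : c.IsShortestOddIn S where
  odd_length := hodd
  support_subset := hcS
  length_le u p hp hpS := by
    obtain ⟨w, q, hq, hqodd, hle, hsub⟩ := p.exists_isCycle_odd_length_le hp
    exact (hmin w q hq hqodd fun x hx => hpS x (hsub hx)).trans hle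

namespace IsShortestOddIn

variable {S : Set V} {v : V} {c : G.Walk v v}

theorem rotate [DecidableEq V] (hc : c.IsShortestOddIn S) {u : V} (hu : u ∈ c.support) :
    (c.rotate u hu).IsShortestOddIn S where
  odd_length := by rw [length_rotate]; exact hc.odd_length
  support_subset x hx := hc.support_subset x ((mem_support_rotate_iff ..).mp hx)
  length_le _ p hp hpS := by rw [length_rotate]; exact hc.length_le p hp hpS

/- Closing the arc of `c` from position `a` to `b`, resp. the complementary arc, with a walk `q`
gives closed walks of lengths `b - a + q.length` and `c.length - (b - a) + q.length`. As `c.length`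
is odd, exactly one of them is odd, hence at least as long as `c`. -/

theorem length_le_sub_add_length (hc : c.IsShortestOddIn S) {a b : ℕ} (hab : a ≤ b)
    (hb : b ≤ c.length) (q : G.Walk (c.getVert b) (c.getVert a)) (hqS : ∀ x ∈ q.support, x ∈ S)
    (hodd : Odd (b - a + q.length)) : c.length ≤ b - a + q.length := by
  set p := (((c.take b).drop a).copy (by rw [take_getVert, min_eq_right hab]) rfl).append q
  have hp : p.length = b - a + q.length := by simp [p, take_length, drop_length, hb]
  refine hp ▸ hc.length_le p (hp ▸ hodd) fun x hx => ?_
  rcases (mem_support_append_iff _ _).mp hx with hx | hx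
  · rw [support_copy] at hx
    exact hc.support_subset x
      (((isSubwalk_drop _ a).trans (isSubwalk_take c b)).support_subset hx)
  · exact hqS x hx

theorem sub_le_length (hc : c.IsShortestOddIn S) {a b : ℕ} (hab : a ≤ b) (hb : b ≤ c.length)
    (q : G.Walk (c.getVert b) (c.getVert a)) (hqS : ∀ x ∈ q.support, x ∈ S)
    (heven : Even (b - a + q.length)) : b - a ≤ q.length := by
  set p := (c.drop b).append ((c.take a).append q.reverse)
  have hp : p.length = c.length - (b - a) + q.length := by
    simp only [p, length_append, drop_length, take_length, length_reverse]
    omega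
  have hodd : Odd p.length := by
    have := hc.odd_length
    rw [Nat.odd_iff] at this ⊢
    rw [Nat.even_iff] at heven
    omega
  have := hc.length_le p hodd fun x hx => by
    simp only [p, mem_support_append_iff, support_reverse, List.mem_reverse] at hx
    rcases hx with hx | hx | hx
    · exact hc.support_subset x ((isSubwalk_drop c b).support_subset hx)
    · exact hc.support_subset x ((isSubwalk_take c a).support_subset hx)
    · exact hqS x hx
  omega

theorem sub_le_one_or_length_le_of_adj (hc : c.IsShortestOddIn S) {a b : ℕ} (hab : a ≤ b)
    (hb : b ≤ c.length) (h : G.Adj (c.getVert a) (c.getVert b)) :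
    b - a ≤ 1 ∨ c.length ≤ b - a + 1 := by
  have hqS : ∀ x ∈ (cons h.symm nil : G.Walk _ (c.getVert a)).support, x ∈ S := by
    simpa using ⟨hc.support_subset _ (c.getVert_mem_support b),
      hc.support_subset _ (c.getVert_mem_support a)⟩
  rcases Nat.even_or_odd (b - a + 1) with heven | hodd
  · exact .inl (by simpa using hc.sub_le_length hab hb _ hqS heven)
  · exact .inr (by simpa using hc.length_le_sub_add_length hab hb _ hqS hodd)

theorem sub_le_two_or_length_le_of_adj_of_adj (hc : c.IsShortestOddIn S) {a b : ℕ}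
    (hab : a ≤ b) (hb : b ≤ c.length) {w : V} (hw : w ∈ S) (ha : G.Adj w (c.getVert a))
    (hb' : G.Adj w (c.getVert b)) :
    (b - a) % 2 = 0 ∧ b - a ≤ 2 ∨ (b - a) % 2 = 1 ∧ c.length ≤ b - a + 2 := by
  have hqS : ∀ x ∈ (cons hb'.symm (cons ha nil)).support, x ∈ S := by
    simpa using ⟨hc.support_subset _ (c.getVert_mem_support b), hw,
      hc.support_subset _ (c.getVert_mem_support a)⟩
  rcases Nat.even_or_odd (b - a + 2) with heven | hodd
  · have := hc.sub_le_length hab hb _ hqS heven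
    rw [Nat.even_iff] at heven
    simp only [length_cons, length_nil] at this
    omega
  · have := hc.length_le_sub_add_length hab hb _ hqS hodd
    rw [Nat.odd_iff] at hodd
    simp only [length_cons, length_nil] at this
    omega

theorem card_filter_adj_le_two [DecidableEq V] [DecidableRel G.Adj] (hc : c.IsShortestOddIn S)
    (h5 : 5 ≤ c.length) {w : V} (hw : w ∈ S) : #{x ∈ c.support.toFinset | G.Adj w x} ≤ 2 := by
  by_contra! h
  obtain ⟨x, hx, y, hy, z, hz, hxy, hxz, hyz⟩ := two_lt_card.mp h
  simp only [mem_filter, List.mem_toFinset] at hx hy hz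
  -- Started at `x`, the cycle has `y, z` at positions `2` and `c.length - 2`, at odd distance
  -- `c.length - 4`, which is too short.
  have hc' := hc.rotate hx.1
  set c' := c.rotate x hx.1
  have hlen : c'.length = c.length := length_rotate ..
  obtain ⟨b, rfl, hb⟩ := mem_support_iff_exists_getVert (p := c').mp
    ((mem_support_rotate_iff c x hx.1).mpr hy.1)
  obtain ⟨b', rfl, hb'⟩ := mem_support_iff_exists_getVert (p := c').mp
    ((mem_support_rotate_iff c x hx.1).mpr hz.1)
  have hx0 : c'.getVert 0 = x := getVert_zero _
  have hxt : c'.getVert c'.length = x := getVert_length _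
  have hwx : G.Adj w (c'.getVert 0) := hx0.symm ▸ hx.2
  have h0b := hc'.sub_le_two_or_length_le_of_adj_of_adj (Nat.zero_le b) hb hw hwx hy.2
  have h0b' := hc'.sub_le_two_or_length_le_of_adj_of_adj (Nat.zero_le b') hb' hw hwx hz.2
  have hodd := Nat.odd_iff.mp hc'.odd_length
  have hb0 : b ≠ 0 := by rintro rfl; exact hxy hx0.symm
  have hbt : b ≠ c'.length := by rintro rfl; exact hxy hxt.symm
  have hb'0 : b' ≠ 0 := by rintro rfl; exact hxz hx0.symm
  have hb't : b' ≠ c'.length := by rintro rfl; exact hxz hxt.symm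
  have hbb' : b ≠ b' := by rintro rfl; exact hyz rfl
  rcases le_total b b' with hle | hle
  · have := hc'.sub_le_two_or_length_le_of_adj_of_adj hle hb' hw hy.2 hz.2
    omega
  · have := hc'.sub_le_two_or_length_le_of_adj_of_adj hle hb hw hz.2 hy.2
    omega

end IsShortestOddIn

section Compl

variable {R : SimpleGraph V} {S : Set V} {v : V} {c : Rᶜ.Walk v v}

theorem IsShortestOddIn.adj_getVert (hc : c.IsShortestOddIn S) (hcyc : c.IsCycle) {a b : ℕ}
    (hab : a + 2 ≤ b) (hb : b + 2 ≤ c.length) : R.Adj (c.getVert a) (c.getVert b) := by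
  have hne : c.getVert a ≠ c.getVert b := fun h => by
    have := hcyc.getVert_injOn' (by simp only [Set.mem_ofPred_eq]; omega)
      (by simp only [Set.mem_ofPred_eq]; omega) h
    omega
  by_contra hR
  have := hc.sub_le_one_or_length_le_of_adj (by omega) (by omega)
    ((compl_adj R _ _).mpr ⟨hne, hR⟩)
  omega

theorem IsShortestOddIn.hasFan (hc : c.IsShortestOddIn S) (hcyc : c.IsCycle) {s : ℕ}
    (hs2 : 2 ≤ s) (hs : c.length = 2 * s + 3) : R.HasFan v s {x | x ∈ c.support} := by
  refine ⟨fun p => c.getVert (2 + p.1 + if p.2 then s else 0), ?_,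
    fun _ => getVert_mem_support .., ?_, ?_⟩
  · rintro ⟨i, a⟩ ⟨j, b⟩ h
    have hi := i.isLt
    have hj := j.isLt
    have hij := hcyc.getVert_injOn' (by simp only [Set.mem_ofPred_eq]; split <;> omega)
      (by simp only [Set.mem_ofPred_eq]; split <;> omega) h
    cases a <;> cases b <;>
      simp only [Prod.mk.injEq, Fin.ext_iff, Bool.false_eq_true, Bool.true_eq_false, ↓reduceIte,
        add_zero, Nat.add_left_cancel_iff, Nat.add_right_cancel_iff, and_true, and_false]
        at hij ⊢ <;> omega
  · rintro ⟨i, a⟩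
    have := i.isLt
    simpa using hc.adj_getVert hcyc (a := 0) (b := 2 + i + if a then s else 0) (by omega)
      (by split <;> omega)
  · intro i
    have := i.isLt
    exact hc.adj_getVert hcyc (by simp only [Bool.false_eq_true, ↓reduceIte]; omega)
      (by simp only [↓reduceIte]; omega)

theorem IsShortestOddIn.hasFan_of_mem [DecidableEq V] (hc : c.IsShortestOddIn S)
    (hcyc : c.IsCycle) {s : ℕ} (hs2 : 2 ≤ s) (hs : c.length = 2 * s + 3) {x : V}
    (hx : x ∈ c.support) : R.HasFan x s {y | y ∈ c.support} := by
  have := (hc.rotate hx).hasFan ((isCycle_rotate hx).mpr hcyc) hs2 (by rw [length_rotate, hs])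
  simpa [mem_support_rotate_iff] using this

end Compl

end Walk

theorem card_filter_adj_add_card_filter_compl_adj [DecidableEq V] (G : SimpleGraph V)
    [DecidableRel G.Adj] {C : Finset V} {w : V} (hw : w ∉ C) :
    #{x ∈ C | G.Adj w x} + #{x ∈ C | Gᶜ.Adj w x} = #C := by
  rw [← card_filter_add_card_filter_not (s := C) (G.Adj w)]
  congr 2
  ext x
  simp only [mem_filter, compl_adj, and_congr_right_iff]
  intro hx
  simp [(ne_of_mem_of_not_mem hx hw).symm]

theorem Walk.IsShortestOddIn.length_lt_nine [Fintype V] [DecidableEq V] {R : SimpleGraph V}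
    [DecidableRel R.Adj] {n : ℕ} {K : Finset V} (hn : 2 ≤ n) (hV : 6 * n ≤ Fintype.card V)
    (hfan : ¬ContainsFan R n) (hK4 : ¬ContainsK4 Rᶜ) (hK : R.IsClique ↑K) (hcard : #K = 2 * n)
    {v : V} {c : Rᶜ.Walk v v} (hc : c.IsShortestOddIn (↑K)ᶜ) (hcyc : c.IsCycle) :
    c.length < 9 := by
  by_contra! h9
  obtain ⟨s, hs⟩ : ∃ s, c.length = 2 * s + 3 :=
    ⟨(c.length - 3) / 2, by have := Nat.odd_iff.mp hc.odd_length; omega⟩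
  set C := c.support.toFinset
  set W := (K ∪ C)ᶜ
  have hC : #C = c.length := hcyc.card_support_toFinset
  have hWK : ∀ w ∈ W, w ∉ K ∧ w ∉ C := fun w hw => by simpa [W, not_or] using hw
  have hfanC : ∀ x ∈ C, R.HasFan x s ↑C := fun x hx => by
    simpa [C] using hc.hasFan_of_mem hcyc (by omega) hs (List.mem_toFinset.mp hx)
  have hsn : s < n := by
    by_contra! hns
    exact hfan ((hfanC v (by simp [C])).containsFan hns)
  have hcol : ∀ x ∈ C, #{w ∈ W | R.Adj w x} ≤ 2 * (n - s) := fun x hx =>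
    (hfanC x hx).card_filter_adj_le hfan
      (disjoint_coe.mpr (Finset.disjoint_left.mpr fun w hw => (hWK w hw).2))
      fun a ha b hb c hc => adj_or_adj_or_adj_of_notMem hn hfan hK4 hK hcard.ge (hWK a ha).1
        (hWK b hb).1 (hWK c hc).1
  have hrow : ∀ w ∈ W, c.length - 2 ≤ #{x ∈ C | R.Adj w x} := fun w hw => by
    have := card_filter_adj_add_card_filter_compl_adj R (hWK w hw).2
    have : #{x ∈ C | Rᶜ.Adj w x} ≤ 2 := hc.card_filter_adj_le_two (by omega) (hWK w hw).1
    omega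
  have hcount := card_mul_le_card_mul (fun w x => R.Adj w x) hrow hcol
  have hW : #W + #K + #C = Fintype.card V := by
    have : #W = Fintype.card V - #(K ∪ C) := card_compl _
    have := card_le_univ (K ∪ C)
    have : #(K ∪ C) = #K + #C := card_union_of_disjoint
      (disjoint_right.mpr fun x hx => hc.support_subset x (List.mem_toFinset.mp hx))
    omega
  obtain ⟨r, rfl⟩ : ∃ r, n = s + r := ⟨n - s, by omega⟩
  have hW' : 4 * r + 2 * s ≤ #W + 3 := by omega
  rw [hC, show s + r - s = r by omega, hs, show 2 * s + 3 - 2 = 2 * s + 1 by omega] at hcount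
  nlinarith [Nat.mul_le_mul_right (2 * s + 1) hW']

end SimpleGraph

/-- If an `(Fₙ, K₄)`-free coloring of `K_{6n}` (`n ≥ 4`) contains a red clique `K`
of order `2n`, then a shortest blue odd cycle among the vertices outside `K`
has length `5` or `7`. -/
theorem shortest_blue_odd_cycle (n : ℕ) (hn : 4 ≤ n)
    (R : SimpleGraph (Fin (6 * n)))
    (hfree : ¬ ContainsFan R n ∧ ¬ ContainsK4 Rᶜ)
    (K : Finset (Fin (6 * n))) (hKcard : K.card = 2 * n) (hKred : R.IsClique ↑K)
    (v : Fin (6 * n)) (c : Rᶜ.Walk v v) (hc : c.IsCycle) (hodd : Odd c.length)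
    (havoid : ∀ x ∈ c.support, x ∉ K)
    (hmin : ∀ (w : Fin (6 * n)) (d : Rᶜ.Walk w w), d.IsCycle → Odd d.length →
      (∀ x ∈ d.support, x ∉ K) → c.length ≤ d.length) :
    c.length = 5 ∨ c.length = 7 := by
  classical
  obtain ⟨hfan, hK4⟩ := hfree
  have hshort : c.IsShortestOddIn (↑K)ᶜ := Walk.isShortestOddIn_of_forall_isCycle hodd havoid hmin
  have h9 := hshort.length_lt_nine (by omega) (by simp) hfan hK4 hKred hKcard hc
  have h3 : c.length ≠ 3 := fun h3 => by
    have h01 := (compl_adj R _ _).mp (c.adj_getVert_succ (i := 0) (by omega))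
    have h12 := (compl_adj R _ _).mp (c.adj_getVert_succ (i := 1) (by omega))
    have h20 := (compl_adj R _ _).mp (c.adj_getVert_succ (i := 2) (by omega))
    rw [c.getVert_zero] at h01
    rw [show 2 + 1 = c.length by omega, c.getVert_length] at h20
    rcases adj_or_adj_or_adj_of_notMem (by omega) hfan hK4 hKred hKcard.ge
      (havoid v c.start_mem_support) (havoid _ (c.getVert_mem_support 1))
      (havoid _ (c.getVert_mem_support 2)) h01.1 h20.1.symm h12.1 with h | h | h
    exacts [h01.2 h, h20.2 h.symm, h12.2 h]
  have := hc.three_le_length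
  obtain ⟨k, hk⟩ := hodd
  omega
end

section
/- Let n ≥ 4 be an integer, let K_{6n} be given a red/blue edge-coloring that is (F_n, K_4)-free, and suppose there is a set K of 2n vertices all of whose internal edges are red. Then the subgraph formed by the blue edges among the 4n vertices outside K contains no odd cycle; that is, it is bipartite. -/
open SimpleGraph

/-!
A vertex outside the red clique `K` has at most one red neighbour in `K`: two of them, `u` and
`w`, would give a red `Fₙ` centred at `u`. So three vertices outside `K` spanning a blue
triangle would have a common blue neighbour in `K`, a blue `K₄`. Hence the blue graph outside
`K` is triangle-free, and then every red neighbourhood there has at most `2n` vertices, since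
red edges can be paired off greedily in a larger one to give a red `Fₙ`. Now let `C` be a
shortest odd blue cycle outside `K`, of length `L ≥ 5`. By minimality every vertex has at most
two blue neighbours on `C`, so the red degrees of the vertices of `C` add up to at least
`4n(L - 2) - L`, which exceeds `2nL`.
-/

open Finset

lemma ContainsFan.map {V W : Type*} {G : SimpleGraph V} {H : SimpleGraph W} {n : ℕ}
    (h : ContainsFan G n) (φ : G ↪g H) : ContainsFan H n := by
  obtain ⟨f, hf⟩ := h
  exact ⟨f.trans φ.toEmbedding, fun u v huv => φ.map_adj_iff.mpr (hf u v huv)⟩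

namespace SimpleGraph

variable {V : Type*} {G : SimpleGraph V}

def HasMatchingIn (G : SimpleGraph V) (Z : Finset V) (k : ℕ) : Prop :=
  ∃ m : Fin k × Bool ↪ V, (∀ p, m p ∈ Z) ∧ ∀ i, G.Adj (m (i, false)) (m (i, true))

namespace HasMatchingIn

variable {Z Z' : Finset V} {k : ℕ}

lemma zero : G.HasMatchingIn Z 0 :=
  ⟨⟨fun p => p.1.elim0, fun p => p.1.elim0⟩, fun p => p.1.elim0, fun i => i.elim0⟩

lemma mono (h : G.HasMatchingIn Z k) (hZ : Z ⊆ Z') : G.HasMatchingIn Z' k := by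
  obtain ⟨m, hmZ, hm⟩ := h
  exact ⟨m, fun p => hZ (hmZ p), hm⟩

lemma insert_insert [DecidableEq V] {a b : V} (h : G.HasMatchingIn Z k) (hab : G.Adj a b)
    (ha : a ∉ Z) (hb : b ∉ Z) : G.HasMatchingIn (insert a (insert b Z)) (k + 1) := by
  obtain ⟨m, hmZ, hm⟩ := h
  let f : Fin (k + 1) × Bool → V := fun p => Fin.cases (cond p.2 b a) (fun i => m (i, p.2)) p.1
  have hma (p) : m p ≠ a := fun h => ha (h ▸ hmZ p)
  have hmb (p) : m p ≠ b := fun h => hb (h ▸ hmZ p)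
  have hf : Function.Injective f := by
    rintro ⟨i, s⟩ ⟨j, t⟩ h
    induction i using Fin.cases <;> induction j using Fin.cases <;> cases s <;> cases t <;>
      simp_all [f, hab.ne, hab.ne.symm, m.injective.eq_iff, (hma _).symm, (hmb _).symm]
  refine ⟨⟨f, hf⟩, ?_, ?_⟩
  · rintro ⟨i, s⟩
    induction i using Fin.cases <;> cases s <;> simp [f, hmZ]
  · intro i
    induction i using Fin.cases <;> simp [f, hab, hm]

lemma containsFan {n : ℕ} {c : V} (h : G.HasMatchingIn Z n) (hc : ∀ z ∈ Z, G.Adj c z) :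
    ContainsFan G n := by
  obtain ⟨m, hmZ, hm⟩ := h
  have hcm : c ∉ Set.range m := by
    rintro ⟨p, hp⟩
    exact (hc _ (hmZ p)).ne hp.symm
  refine ⟨m.optionElim c hcm, ?_⟩
  rintro (_ | p) (_ | q) ⟨hne, h⟩
  · exact absurd rfl hne
  · exact hc _ (hmZ q)
  · exact (hc _ (hmZ p)).symm
  · obtain ⟨i, s, t, rfl, rfl⟩ : ∃ i s t, p = (i, s) ∧ q = (i, t) := by simpa using h
    cases s <;> cases t <;> simp_all [(hm i).symm]

end HasMatchingIn

lemma hasMatchingIn_of_forall_exists_adj [DecidableEq V] {Z : Finset V} {t k : ℕ}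
    (hZ : ∀ T ⊆ Z, t ≤ #T → ∃ a ∈ T, ∃ b ∈ T, G.Adj a b) (hk : 2 * k + t ≤ #Z + 2) :
    G.HasMatchingIn Z k := by
  induction k generalizing Z with
  | zero => exact .zero
  | succ k ih =>
    obtain ⟨a, ha, b, hb, hab⟩ := hZ Z subset_rfl (by omega)
    have hbZ : b ∈ Z.erase a := mem_erase.mpr ⟨hab.ne.symm, hb⟩
    have hsub : (Z.erase a).erase b ⊆ Z := (erase_subset _ _).trans (erase_subset _ _)
    have hrest : G.HasMatchingIn ((Z.erase a).erase b) k := by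
      refine ih (fun T hT => hZ T (hT.trans hsub)) ?_
      rw [card_erase_of_mem hbZ, card_erase_of_mem ha]
      omega
    refine (hrest.insert_insert hab (by simp) (by simp)).mono ?_
    rw [insert_erase hbZ, insert_erase ha]

namespace Walk

variable {v : V}

def IsShortestOddLoop (w : G.Walk v v) : Prop :=
  Odd w.length ∧ ∀ u (q : G.Walk u u), Odd q.length → w.length ≤ q.length

lemma exists_isShortestOddLoop (h : ∃ v, ∃ w : G.Walk v v, Odd w.length) :
    ∃ v, ∃ w : G.Walk v v, w.IsShortestOddLoop := by
  classical
  have hP : ∃ ℓ, ∃ v, ∃ w : G.Walk v v, Odd w.length ∧ w.length = ℓ := by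
    obtain ⟨v, w, hw⟩ := h
    exact ⟨_, v, w, hw, rfl⟩
  obtain ⟨v, w, hodd, hlen⟩ := Nat.find_spec hP
  exact ⟨v, w, hodd, fun u q hq => hlen ▸ Nat.find_min' hP ⟨u, q, hq, rfl⟩⟩

lemma five_le_length_of_odd (hG : G.CliqueFree 3) (w : G.Walk v v) (hw : Odd w.length) :
    5 ≤ w.length := by
  classical
  have hadj (i : ℕ) (hi : i < w.length) := w.adj_getVert_succ hi
  obtain ⟨k, hk⟩ := hw
  by_contra! h
  obtain hk | hk : k = 0 ∨ k = 1 := by omega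
  · have := hadj 0 (by omega)
    rw [show 0 + 1 = w.length by omega, getVert_length, getVert_zero] at this
    exact this.ne rfl
  · have h3 := hadj 2 (by omega)
    rw [show 2 + 1 = w.length by omega, getVert_length] at h3
    have h02 : G.Adj (w.getVert 0) (w.getVert 2) := by rw [getVert_zero]; exact h3.symm
    exact hG _ (is3Clique_triple_iff.mpr ⟨hadj 0 (by omega), h02, hadj 1 (by omega)⟩)

variable {w : G.Walk v v}

/-- Replacing the arc of `w` from its `i`-th to its `j`-th vertex by `b`, and closing that arc up
with `b`, give two loops of lengths of different parity; the odd one is at least as long as `w`. -/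
lemma IsShortestOddLoop.splice (hw : w.IsShortestOddLoop) {i j : ℕ} (hij : i ≤ j)
    (hj : j ≤ w.length) (b : G.Walk (w.getVert i) (w.getVert j)) :
    (Even (j - i + b.length) → j - i ≤ b.length) ∧
      (Odd (j - i + b.length) → w.length ≤ j - i + b.length) := by
  have hL := Nat.odd_iff.mp hw.1
  constructor
  · intro he
    rw [Nat.even_iff] at he
    have := hw.2 v ((w.take i).append (b.append (w.drop j)))
      (by simp only [length_append, take_length, drop_length, Nat.odd_iff]; omega)
    simp only [length_append, take_length, drop_length] at this
    omega
  · intro ho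
    let arc : G.Walk (w.getVert i) (w.getVert j) :=
      ((w.drop i).take (j - i)).copy rfl (by rw [drop_getVert, Nat.add_sub_cancel' hij])
    have harc : arc.length = j - i := by simp [arc]; omega
    simpa [harc] using hw.2 _ (arc.append b.reverse) (by simpa [harc] using ho)

lemma IsShortestOddLoop.injOn_getVert (hw : w.IsShortestOddLoop) :
    Set.InjOn w.getVert (Set.Iio w.length) := by
  intro i hi j hj h
  wlog hij : i ≤ j generalizing i j
  · exact (this hj hi h.symm (by omega)).symm
  have := hw.splice hij (le_of_lt hj) (nil.copy rfl h)
  simp only [length_copy, length_nil, add_zero] at this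
  simp only [Set.mem_Iio] at hi hj
  rcases Nat.even_or_odd (j - i) with he | ho
  · have := this.1 he; omega
  · have := this.2 ho; omega

lemma IsShortestOddLoop.eq_or_gap_eq_two_of_adj (hw : w.IsShortestOddLoop) {x : V} {i j : ℕ}
    (hi : i < w.length) (hj : j < w.length) (hxi : G.Adj x (w.getVert i))
    (hxj : G.Adj x (w.getVert j)) :
    i = j ∨ i + 2 = j ∨ j + 2 = i ∨ i + w.length = j + 2 ∨ j + w.length = i + 2 := by
  wlog hij : i ≤ j generalizing i j
  · have := this hj hi hxj hxi (by omega); omega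
  have := hw.splice hij hj.le (cons hxi.symm (cons hxj nil))
  have hL := Nat.odd_iff.mp hw.1
  simp only [length_cons, length_nil, Nat.even_iff, Nat.odd_iff] at this
  omega

lemma IsShortestOddLoop.card_filter_adj_le_two [DecidableEq V] [DecidableRel G.Adj]
    (hw : w.IsShortestOddLoop) (h3 : w.length ≠ 3) (x : V) :
    #(((range w.length).image w.getVert).filter (G.Adj x)) ≤ 2 := by
  rw [filter_image]
  refine card_image_le.trans (not_lt.mp fun h => ?_)
  obtain ⟨a, ha, b, hb, c, hc, hab, hac, hbc⟩ := two_lt_card.mp h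
  simp only [mem_filter, mem_range] at ha hb hc
  have hL := Nat.odd_iff.mp hw.1
  have hab' := hw.eq_or_gap_eq_two_of_adj ha.1 hb.1 ha.2 hb.2
  have hac' := hw.eq_or_gap_eq_two_of_adj ha.1 hc.1 ha.2 hc.2
  have hbc' := hw.eq_or_gap_eq_two_of_adj hb.1 hc.1 hb.2 hc.2
  omega

end Walk

lemma exists_adj_of_cliqueFree_compl {T : Finset V} (hG : Gᶜ.CliqueFree 3) (hT : 3 ≤ #T) :
    ∃ a ∈ T, ∃ b ∈ T, G.Adj a b := by
  classical
  obtain ⟨a, ha, b, hb, c, hc, hab, hac, hbc⟩ := two_lt_card.mp hT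
  by_contra! h
  exact hG {a, b, c} (is3Clique_triple_iff.mpr ⟨⟨hab, h a ha b hb⟩, ⟨hac, h a ha c hc⟩,
    ⟨hbc, h b hb c hc⟩⟩)

lemma degree_le_of_not_containsFan [Fintype V] [DecidableRel G.Adj] {n : ℕ}
    (hG : Gᶜ.CliqueFree 3) (hfan : ¬ ContainsFan G n) (u : V) : G.degree u ≤ 2 * n := by
  classical
  by_contra! h
  have hZ : G.HasMatchingIn (G.neighborFinset u) n :=
    hasMatchingIn_of_forall_exists_adj (t := 3)
      (fun _ _ hT => exists_adj_of_cliqueFree_compl hG hT)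
      (by rw [card_neighborFinset_eq_degree]; omega)
  exact hfan (hZ.containsFan fun z hz => (mem_neighborFinset _ _ _).mp hz)

lemma card_le_card_filter_adj_add_card_filter_compl_adj [DecidableEq V] [DecidableRel G.Adj]
    (C : Finset V) (x : V) :
    #C ≤ #(C.filter (G.Adj x)) + #(C.filter (Gᶜ.Adj x)) + if x ∈ C then 1 else 0 :=
  calc #C ≤ #(C.filter (G.Adj x) ∪ C.filter (Gᶜ.Adj x) ∪ C.filter (x = ·)) := by
        refine card_le_card fun u hu => ?_
        by_cases hxu : x = u <;> by_cases hadj : G.Adj x u <;> simp [hu, hxu, hadj]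
    _ ≤ #(C.filter (G.Adj x)) + #(C.filter (Gᶜ.Adj x)) + #(C.filter (x = ·)) :=
        (card_union_le _ _).trans (Nat.add_le_add_right (card_union_le _ _) _)
    _ = _ := by rw [filter_eq]; split_ifs <;> simp

lemma sum_card_filter_adj_eq_sum_degree [Fintype V] [DecidableEq V] [DecidableRel G.Adj]
    (C : Finset V) : ∑ x, #(C.filter (G.Adj x)) = ∑ u ∈ C, G.degree u := by
  have := sum_card_bipartiteAbove_eq_sum_card_bipartiteBelow (s := C) (t := univ) (r := G.Adj)
  simp only [bipartiteAbove, bipartiteBelow] at this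
  simp_rw [← card_neighborFinset_eq_degree, neighborFinset_eq_filter, this]
  exact sum_congr rfl fun x _ => congrArg card (filter_congr fun u _ => G.adj_comm x u)

theorem colorable_two_compl_of_not_containsFan [Fintype V] {n : ℕ} (hn : 3 ≤ n)
    (hV : 4 * n ≤ Fintype.card V) (hG : Gᶜ.CliqueFree 3) (hfan : ¬ ContainsFan G n) :
    Gᶜ.Colorable 2 := by
  classical
  rw [two_colorable_iff_forall_loop_even]
  by_contra! h
  simp only [Nat.not_even_iff_odd] at h
  obtain ⟨v, w, hw⟩ := Walk.exists_isShortestOddLoop h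
  set L := w.length
  set C := (range L).image w.getVert
  have hC : #C = L := by
    rw [card_image_of_injOn (by simpa using hw.injOn_getVert), card_range]
  have hL : 5 ≤ L := w.five_le_length_of_odd hG hw.1
  have hx (x : V) : L ≤ #(C.filter (G.Adj x)) + 2 + if x ∈ C then 1 else 0 := by
    have hsplit := card_le_card_filter_adj_add_card_filter_compl_adj (G := G) C x
    have hblue : #(C.filter (Gᶜ.Adj x)) ≤ 2 := hw.card_filter_adj_le_two (by omega) x
    omega
  have hdeg : ∑ x, #(C.filter (G.Adj x)) ≤ L * (2 * n) := by
    rw [sum_card_filter_adj_eq_sum_degree, ← hC, ← smul_eq_mul]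
    exact sum_le_card_nsmul _ _ _ fun u _ => degree_le_of_not_containsFan hG hfan u
  have hsum : Fintype.card V * L ≤ L * (2 * n) + 2 * Fintype.card V + L := by
    have hsum := sum_le_sum fun x (_ : x ∈ univ) => hx x
    simp only [sum_const, card_univ, smul_eq_mul, sum_add_distrib, sum_boole, Nat.cast_id,
      filter_mem_eq_inter, univ_inter, hC] at hsum
    omega
  nlinarith

lemma compl_induce (s : Set V) : (G.induce s)ᶜ = Gᶜ.induce s := by
  ext a b
  simp [Subtype.ext_iff]

lemma card_filter_adj_le_one_of_isClique_s8 [DecidableEq V] [DecidableRel G.Adj] {n : ℕ}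
    (hn : 0 < n) (hfan : ¬ ContainsFan G n) {K : Finset V} (hK : G.IsClique K)
    (hKcard : 2 * n ≤ #K) {x : V} (hx : x ∉ K) : #(K.filter (G.Adj x)) ≤ 1 := by
  by_contra! h
  obtain ⟨u, hu, w, hw, huw⟩ := one_lt_card.mp h
  rw [mem_filter] at hu hw
  have hwu : w ∈ K.erase u := mem_erase.mpr ⟨huw.symm, hw.1⟩
  have hsub : (K.erase u).erase w ⊆ K := (erase_subset _ _).trans (erase_subset _ _)
  have hm : G.HasMatchingIn ((K.erase u).erase w) (n - 1) := by
    refine hasMatchingIn_of_forall_exists_adj (t := 2) (fun T hT h2 => ?_) ?_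
    · obtain ⟨a, ha, b, hb, hab⟩ := one_lt_card.mp h2
      exact ⟨a, ha, b, hb, hK (hsub (hT ha)) (hsub (hT hb)) hab⟩
    · rw [card_erase_of_mem hwu, card_erase_of_mem hu.1]
      omega
  have hm' := hm.insert_insert hw.2 (fun h => hx (hsub h)) (by simp)
  rw [Nat.sub_add_cancel hn] at hm'
  refine hfan (hm'.containsFan (c := u) fun z hz => ?_)
  simp only [mem_insert, mem_erase] at hz
  rcases hz with rfl | rfl | ⟨-, hzu, hzK⟩
  · exact hu.2.symm
  · exact hK hu.1 hw.1 huw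
  · exact hK hu.1 hzK (Ne.symm hzu)

lemma cliqueFree_three_compl_induce {n : ℕ} (hn : 2 ≤ n) (hfan : ¬ ContainsFan G n)
    (hK4 : ¬ ContainsK4 Gᶜ) {K : Finset V} (hK : G.IsClique K) (hKcard : 2 * n ≤ #K) :
    (Gᶜ.induce {x | x ∉ K}).CliqueFree 3 := by
  classical
  intro T hT
  obtain ⟨a, b, c, hab, hac, hbc, -⟩ := is3Clique_iff.mp hT
  have hred (x : {x | x ∉ K}) : #(K.filter (G.Adj x)) ≤ 1 :=
    card_filter_adj_le_one_of_isClique_s8 (by omega) hfan hK hKcard x.2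
  obtain ⟨u, hu, hblue⟩ := exists_mem_notMem_of_card_lt_card
    (s := K.filter (G.Adj a) ∪ K.filter (G.Adj b) ∪ K.filter (G.Adj c)) (t := K) <| by
      have := card_union_le (K.filter (G.Adj a) ∪ K.filter (G.Adj b)) (K.filter (G.Adj c))
      have := card_union_le (K.filter (G.Adj a)) (K.filter (G.Adj b))
      have := hred a; have := hred b; have := hred c
      omega
  have hu' (x : {x | x ∉ K}) (hx : ¬ G.Adj x u) : Gᶜ.Adj u x :=
    ⟨fun h => x.2 (h ▸ hu), fun h => hx h.symm⟩
  simp only [mem_union, mem_filter, hu, true_and, not_or] at hblue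
  exact hK4 ⟨u, a, b, c, hu' a hblue.1.1, hu' b hblue.1.2, hu' c hblue.2, hab, hac, hbc⟩

end SimpleGraph

/-- If an `(Fₙ, K₄)`-free coloring of `K_{6n}` (`n ≥ 4`) contains a red clique `K`
of order `2n`, then the blue subgraph on the vertices outside `K` contains no odd
cycle; that is, it is bipartite (2-colorable). -/
theorem blue_outside_bipartite (n : ℕ) (hn : 4 ≤ n)
    (R : SimpleGraph (Fin (6 * n)))
    (hfree : ¬ ContainsFan R n ∧ ¬ ContainsK4 Rᶜ)
    (K : Finset (Fin (6 * n))) (hKcard : K.card = 2 * n) (hKred : R.IsClique ↑K) :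
    (∀ (v : Fin (6 * n)) (c : Rᶜ.Walk v v), c.IsCycle →
      (∀ x ∈ c.support, x ∉ K) → ¬ Odd c.length) ∧
    (Rᶜ.induce {x : Fin (6 * n) | x ∉ K}).Colorable 2 := by
  obtain ⟨hfan, hK4⟩ := hfree
  have hbip : (Rᶜ.induce {x | x ∉ K}).Colorable 2 := by
    rw [← compl_induce]
    refine colorable_two_compl_of_not_containsFan (n := n) (by omega) ?_ ?_
      fun h => hfan (h.map (Embedding.induce _))
    · simp only [Set.coe_ofPred, Fintype.card_subtype_compl, Fintype.card_coe, Fintype.card_fin,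
        hKcard]
      omega
    · rw [compl_induce]
      exact cliqueFree_three_compl_induce (by omega) hfan hK4 hKred hKcard.ge
  refine ⟨fun v c _ hc hodd => ?_, hbip⟩
  have hlen : (c.induce _ hc).length = c.length :=
    (Walk.length_map _ _).symm.trans (congrArg Walk.length (Walk.map_induce c hc))
  have heven := two_colorable_iff_forall_loop_even.mp hbip _ (c.induce _ hc)
  rw [hlen] at heven
  exact Nat.not_odd_iff_even.mpr heven hodd
end

section
/- Let n ≥ 2 be an integer. Partition the vertex set of K_{6n} into three sets A_1, A_2, A_3 each of size 2n, and color all edges inside each A_i red and every edge between two different parts blue (so the red subgraph is 3K_{2n} and the blue subgraph is the complete tripartite graph K_{2n,2n,2n}). Then this coloring contains no red subgraph isomorphic to F_n and no blue subgraph isomorphic to K_4. Consequently r(F_n, K_4) ≥ 6n + 1. -/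
/-!
The red graph is the "same part" graph of a partition into three parts of size `2n`, so every
vertex has red degree `2n - 1`, whereas the center of a red `Fₙ` would have red degree at least
`2n`. The blue graph is properly coloured by the part map, hence `3`-colourable and `K₄`-free.
Restricting this colouring to any `r ≤ 6n` vertices gives the Ramsey bound.
-/

open SimpleGraph

open Finset Function

variable {V W : Type*}

theorem ContainsFan.of_comap {G : SimpleGraph W} {n : ℕ} (e : V ↪ W)
    (h : ContainsFan (G.comap e) n) : ContainsFan G n :=
  let ⟨f, hf⟩ := h
  ⟨f.trans e, hf⟩

theorem ContainsFan.exists_le_degree [Fintype V] {G : SimpleGraph V} [DecidableRel G.Adj]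
    {n : ℕ} (h : ContainsFan G n) : ∃ v, 2 * n ≤ G.degree v := by
  obtain ⟨f, hf⟩ := h
  refine ⟨f none, ?_⟩
  have hmaps : Set.MapsTo (fun x => f (some x)) (univ : Finset (Fin n × Bool))
      (G.neighborFinset (f none)) := fun x _ => by
    simpa using hf none (some x) ⟨by simp, Or.inl rfl⟩
  calc 2 * n = #(univ : Finset (Fin n × Bool)) := by simp [mul_comm]
    _ ≤ G.degree (f none) :=
      card_le_card_of_injOn _ hmaps fun x _ y _ hxy => by simpa using f.injective hxy

theorem ContainsK4.not_cliqueFree {G : SimpleGraph V} (h : ContainsK4 G) : ¬ G.CliqueFree 4 := by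
  classical
  obtain ⟨a, b, c, d, hab, hac, had, hbc, hbd, hcd⟩ := h
  intro hfree
  refine hfree {a, b, c, d} ⟨?_, ?_⟩
  · simp [IsClique, Set.pairwise_insert, hab, hac, had, hbc, hbd, hcd, hab.symm, hac.symm,
      had.symm, hbc.symm, hbd.symm, hcd.symm]
  · rw [card_insert_of_notMem, card_insert_of_notMem, card_pair hcd.ne] <;>
      simp [hab.ne, hac.ne, had.ne, hbc.ne, hbd.ne]

theorem ContainsK4.of_comap_compl {G : SimpleGraph W} (e : V ↪ W)
    (h : ContainsK4 (G.comap e)ᶜ) : ContainsK4 Gᶜ := by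
  have lift : ∀ {u v}, (G.comap e)ᶜ.Adj u v → Gᶜ.Adj (e u) (e v) := fun huv =>
    ⟨e.injective.ne huv.1, huv.2⟩
  obtain ⟨a, b, c, d, hab, hac, had, hbc, hbd, hcd⟩ := h
  exact ⟨e a, e b, e c, e d, lift hab, lift hac, lift had, lift hbc, lift hbd, lift hcd⟩

section Partition

variable {ι : Type*} {A : ι → Finset V} {G : SimpleGraph V}

theorem degree_lt_card_of_sameBlock [Fintype V] [DecidableRel G.Adj]
    (hG : ∀ u v, G.Adj u v ↔ u ≠ v ∧ ∃ i, u ∈ A i ∧ v ∈ A i)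
    (hA : Pairwise (Disjoint on A)) {v : V} {i : ι} (hv : v ∈ A i) :
    G.degree v < #(A i) := by
  classical
  have hsub : G.neighborFinset v ⊆ (A i).erase v := by
    intro w hw
    obtain ⟨hne, j, hvj, hwj⟩ := (hG v w).mp ((mem_neighborFinset _ _ _).mp hw)
    obtain rfl : j = i := by
      by_contra hji
      exact disjoint_left.mp (hA hji) hvj hv
    exact mem_erase.mpr ⟨hne.symm, hwj⟩
  calc G.degree v ≤ #((A i).erase v) := card_le_card hsub
    _ < #(A i) := card_erase_lt_of_mem hv

theorem not_containsFan_of_sameBlock [Fintype V] {n : ℕ}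
    (hG : ∀ u v, G.Adj u v ↔ u ≠ v ∧ ∃ i, u ∈ A i ∧ v ∈ A i)
    (hA : Pairwise (Disjoint on A)) (hcover : ∀ v, ∃ i, v ∈ A i)
    (hcard : ∀ i, #(A i) ≤ 2 * n) : ¬ ContainsFan G n := by
  classical
  intro hfan
  obtain ⟨v, hv⟩ := hfan.exists_le_degree
  obtain ⟨i, hvi⟩ := hcover v
  exact (hv.trans_lt (degree_lt_card_of_sameBlock hG hA hvi)).not_ge (hcard i)

theorem compl_colorable_of_sameBlock [Fintype ι]
    (hG : ∀ u v, G.Adj u v ↔ u ≠ v ∧ ∃ i, u ∈ A i ∧ v ∈ A i) (hcover : ∀ v, ∃ i, v ∈ A i) :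
    Gᶜ.Colorable (Fintype.card ι) :=
  Coloring.colorable <| Coloring.mk (fun v => (hcover v).choose) fun {u v} huv hcol =>
    huv.2 <| (hG u v).mpr ⟨huv.1, _, (hcover u).choose_spec, hcol ▸ (hcover v).choose_spec⟩

end Partition

theorem ramsey_lower_bound_general (n : ℕ)
    (A1 A2 A3 : Finset (Fin (6 * n)))
    (hc1 : A1.card = 2 * n) (hc2 : A2.card = 2 * n) (hc3 : A3.card = 2 * n)
    (hd12 : Disjoint A1 A2) (hd13 : Disjoint A1 A3) (hd23 : Disjoint A2 A3)
    (hcover : A1 ∪ A2 ∪ A3 = Finset.univ)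
    (R : SimpleGraph (Fin (6 * n)))
    (hR : ∀ u v : Fin (6 * n), R.Adj u v ↔
      u ≠ v ∧ ((u ∈ A1 ∧ v ∈ A1) ∨ (u ∈ A2 ∧ v ∈ A2) ∨ (u ∈ A3 ∧ v ∈ A3))) :
    (¬ ContainsFan R n ∧ ¬ ContainsK4 Rᶜ) ∧
    ∀ r : ℕ, (∀ c : SimpleGraph (Fin r), ContainsFan c n ∨ ContainsK4 cᶜ) →
      6 * n + 1 ≤ r := by
  set A : Fin 3 → Finset (Fin (6 * n)) := ![A1, A2, A3]
  have hG : ∀ u v, R.Adj u v ↔ u ≠ v ∧ ∃ i, u ∈ A i ∧ v ∈ A i := by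
    simpa [Fin.exists_fin_succ, A, or_assoc] using hR
  have hA : Pairwise (Disjoint on A) := by
    intro i j hij
    fin_cases i <;> fin_cases j <;> simp_all [A, onFun, disjoint_comm]
  have hcoverA : ∀ v, ∃ i, v ∈ A i := fun v => by
    have hv : v ∈ A1 ∪ A2 ∪ A3 := hcover ▸ mem_univ v
    simpa [Fin.exists_fin_succ, A, or_assoc] using hv
  have noFan : ¬ ContainsFan R n :=
    not_containsFan_of_sameBlock hG hA hcoverA fun i => by fin_cases i <;> simp [A, *]
  have noK4 : ¬ ContainsK4 Rᶜ := fun hK4 =>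
    hK4.not_cliqueFree ((compl_colorable_of_sameBlock hG hcoverA).cliqueFree (by simp))
  refine ⟨⟨noFan, noK4⟩, fun r hr => ?_⟩
  by_contra! hlt
  obtain hfan | hK4 := hr (R.comap (Fin.castLEEmb (by omega : r ≤ 6 * n)))
  exacts [noFan (hfan.of_comap _), noK4 (hK4.of_comap_compl _)]

/-- The coloring of `K_{6n}` whose red subgraph is `3K_{2n}` (three disjoint red
cliques `A₁, A₂, A₃` of size `2n`) and whose blue subgraph is `K_{2n,2n,2n}`
contains no red `Fₙ` and no blue `K₄`. Consequently `r(Fₙ, K₄) ≥ 6n + 1`. -/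
theorem ramsey_lower_bound (n : ℕ) (hn : 2 ≤ n)
    (A1 A2 A3 : Finset (Fin (6 * n)))
    (hc1 : A1.card = 2 * n) (hc2 : A2.card = 2 * n) (hc3 : A3.card = 2 * n)
    (hd12 : Disjoint A1 A2) (hd13 : Disjoint A1 A3) (hd23 : Disjoint A2 A3)
    (hcover : A1 ∪ A2 ∪ A3 = Finset.univ)
    (R : SimpleGraph (Fin (6 * n)))
    (hR : ∀ u v : Fin (6 * n), R.Adj u v ↔
      u ≠ v ∧ ((u ∈ A1 ∧ v ∈ A1) ∨ (u ∈ A2 ∧ v ∈ A2) ∨ (u ∈ A3 ∧ v ∈ A3))) :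
    (¬ ContainsFan R n ∧ ¬ ContainsK4 Rᶜ) ∧
    ∀ r : ℕ, (∀ c : SimpleGraph (Fin r), ContainsFan c n ∨ ContainsK4 cᶜ) →
      6 * n + 1 ≤ r :=
  ramsey_lower_bound_general n A1 A2 A3 hc1 hc2 hc3 hd12 hd13 hd23 hcover R hR
end
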